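/- arXiv:2605.14072 — 4 statements merged into one kernel-verified Lean document; each statement's English description precedes it below -/
import Mathlib

section
/- Let f, h : ℕ → ℚ be bijections and π a permutation of ℕ. The following are equivalent: (a) π is a graph isomorphism from G_f to G_h, i.e., for all distinct n, m ∈ ℕ, {n,m} is an edge of G_f iff {π(n),π(m)} is an edge of G_h; (b) for every x ∈ c₀₀, ‖x‖_{𝓒_f} = ‖x ∘ π⁻¹‖_{𝓒_h}; (c) π is the identity and there exists an order isomorphism e of (ℚ,≤) such that f = e ∘ h. -/
open scoped ENNReal

/-- The combinatorial extended norm generated by a family of finite sets. -/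
noncomputable def combNorm (F : Set (Finset ℕ)) (x : ℕ → ℝ) : ℝ≥0∞ :=
  ⨆ S ∈ F, ENNReal.ofReal (∑ i ∈ S, |x i|)

/-- Adjacency in the Sierpiński graph `G_f`: `n < m` are joined iff `f n < f m`. -/
def sierAdj (f : ℕ → ℚ) (n m : ℕ) : Prop :=
  (n < m ∧ f n < f m) ∨ (m < n ∧ f m < f n)

/-- The finite cliques of the Sierpiński graph: finite sets on which `f` is
strictly increasing. -/
def sierCliques (f : ℕ → ℚ) : Set (Finset ℕ) :=
  {F | StrictMonoOn f (F : Set ℕ)}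

/-- Indicator function of a pair. -/
def ind (n m : ℕ) : ℕ → ℝ := fun i => if i = n ∨ i = m then 1 else 0

lemma adj_of_mem_clique {f : ℕ → ℚ} {F : Finset ℕ} (hF : F ∈ sierCliques f) {n m : ℕ}
    (hn : n ∈ F) (hm : m ∈ F) (hnm : n ≠ m) : sierAdj f n m := by
  rcases hnm.lt_or_gt with hc | hc
  · exact Or.inl ⟨hc, hF (Finset.mem_coe.mpr hn) (Finset.mem_coe.mpr hm) hc⟩
  · exact Or.inr ⟨hc, hF (Finset.mem_coe.mpr hm) (Finset.mem_coe.mpr hn) hc⟩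

lemma pair_clique {f : ℕ → ℚ} {n m : ℕ} (hadj : sierAdj f n m) :
    ({n, m} : Finset ℕ) ∈ sierCliques f := by
  have key : ∀ a b : ℕ, a < b → f a < f b → StrictMonoOn f ((({a, b} : Finset ℕ)) : Set ℕ) := by
    intro a b hab hfab x hx y hy hxy
    simp only [Finset.coe_insert, Finset.coe_singleton, Set.mem_insert_iff,
      Set.mem_singleton_iff] at hx hy
    rcases hx with rfl | rfl <;> rcases hy with rfl | rfl
    · exact absurd hxy (lt_irrefl _)
    · exact hfab
    · exact absurd (hxy.trans hab) (lt_irrefl _)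
    · exact absurd hxy (lt_irrefl _)
  rcases hadj with ⟨h1, h2⟩ | ⟨h1, h2⟩
  · exact key n m h1 h2
  · have := key m n h1 h2
    rwa [Finset.pair_comm] at this

lemma sum_ind (n m : ℕ) (F : Finset ℕ) :
    ∑ i ∈ F, |ind n m i| = ((F.filter (fun i => i = n ∨ i = m)).card : ℝ) := by
  rw [Finset.card_filter]
  push_cast
  apply Finset.sum_congr rfl
  intro i _
  unfold ind
  split <;> simp

lemma filter_card_le (n m : ℕ) (F : Finset ℕ) :
    (F.filter (fun i => i = n ∨ i = m)).card ≤ 2 := by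
  have hsub : F.filter (fun i => i = n ∨ i = m) ⊆ {n, m} := by
    intro i hi
    simp only [Finset.mem_filter] at hi
    simp only [Finset.mem_insert, Finset.mem_singleton]
    exact hi.2
  calc (F.filter (fun i => i = n ∨ i = m)).card ≤ ({n, m} : Finset ℕ).card :=
        Finset.card_le_card hsub
    _ ≤ ({m} : Finset ℕ).card + 1 := Finset.card_insert_le n {m}
    _ = 2 := by simp

lemma norm_pair (f : ℕ → ℚ) {n m : ℕ} (hnm : n ≠ m) :
    combNorm (sierCliques f) (ind n m) = 2 ↔ sierAdj f n m := by
  constructor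
  · intro hval
    by_contra hadj
    have hle1 : combNorm (sierCliques f) (ind n m) ≤ 1 := by
      apply iSup₂_le
      intro F hF
      rw [sum_ind]
      have hcard : (F.filter (fun i => i = n ∨ i = m)).card ≤ 1 := by
        rw [Finset.card_le_one]
        intro a ha b hb
        simp only [Finset.mem_filter] at ha hb
        obtain ⟨haF, hac⟩ := ha
        obtain ⟨hbF, hbc⟩ := hb
        rcases hac with rfl | rfl <;> rcases hbc with rfl | rfl
        · rfl
        · exact (hadj (adj_of_mem_clique hF haF hbF hnm)).elim
        · exact (hadj (adj_of_mem_clique hF hbF haF hnm)).elim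
        · rfl
      calc ENNReal.ofReal ((F.filter (fun i => i = n ∨ i = m)).card : ℝ)
          ≤ ENNReal.ofReal 1 := ENNReal.ofReal_le_ofReal (by exact_mod_cast hcard)
        _ = 1 := by norm_num
    rw [hval] at hle1
    norm_num at hle1
  · intro hadj
    apply le_antisymm
    · apply iSup₂_le
      intro F _
      rw [sum_ind]
      calc ENNReal.ofReal ((F.filter (fun i => i = n ∨ i = m)).card : ℝ)
          ≤ ENNReal.ofReal 2 := ENNReal.ofReal_le_ofReal (by exact_mod_cast filter_card_le n m F)
        _ = 2 := by norm_num
    · refine le_iSup₂_of_le ({n, m} : Finset ℕ) (pair_clique hadj) ?_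
      have hsum : ∑ i ∈ ({n, m} : Finset ℕ), |ind n m i| = 2 := by
        rw [Finset.sum_pair hnm]
        simp [ind]
        norm_num
      rw [hsum]
      norm_num

lemma key_infinite (f : ℕ → ℚ) (hf : Function.Bijective f) {n m : ℕ} (hnm : n ≠ m) :
    f n < f m ↔ {k | k ≠ n ∧ k ≠ m ∧ sierAdj f k n ∧ ¬ sierAdj f k m}.Infinite := by
  constructor
  · intro hlt
    have h1 : (Set.Ioo (f n) (f m)).Infinite := Set.infinite_coe_iff.1 (Set.Ioo.infinite hlt)
    have h2 : (f ⁻¹' Set.Ioo (f n) (f m)).Infinite :=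
      h1.preimage (by rw [hf.2.range_eq]; exact Set.subset_univ _)
    have h3 := h2.diff (Set.finite_Iic (max n m))
    refine h3.mono ?_
    rintro k ⟨hk1, hk2⟩
    simp only [Set.mem_Iic, not_le] at hk2
    obtain ⟨hfn, hfm⟩ := hk1
    have hkn : n < k := (le_max_left n m).trans_lt hk2
    have hkm : m < k := (le_max_right n m).trans_lt hk2
    refine ⟨hkn.ne', hkm.ne', Or.inr ⟨hkn, hfn⟩, ?_⟩
    rintro (⟨hc, _⟩ | ⟨_, hc⟩)
    · exact absurd hc (not_lt.mpr hkm.le)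
    · exact absurd hc (not_lt.mpr hfm.le)
  · intro hInf
    rcases (hf.injective.ne hnm).lt_or_gt with hc | hc
    · exact hc
    · exfalso
      apply hInf
      apply (Set.finite_Iic (max n m)).subset
      intro k hk
      obtain ⟨hk1, hk2, hk3, hk4⟩ := hk
      simp only [Set.mem_Iic]
      by_contra hle
      push_neg at hle
      have hkn : n < k := (le_max_left n m).trans_lt hle
      have hkm : m < k := (le_max_right n m).trans_lt hle
      have hfk : f n < f k := by
        rcases hk3 with ⟨hc', _⟩ | ⟨_, hc'⟩
        · exact absurd hc' (not_lt.mpr hkn.le)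
        · exact hc'
      exact hk4 (Or.inr ⟨hkm, hc.trans hfk⟩)

theorem stmt_8 (f h : ℕ → ℚ) (hf : Function.Bijective f) (hh : Function.Bijective h)
    (π : Equiv.Perm ℕ) :
    ((∀ n m : ℕ, n ≠ m → (sierAdj f n m ↔ sierAdj h (π n) (π m))) ↔
      (π = Equiv.refl ℕ ∧ ∃ e : ℚ ≃o ℚ, f = e ∘ h)) ∧
    ((∀ x : ℕ → ℝ, (Function.support x).Finite →
        combNorm (sierCliques f) x = combNorm (sierCliques h) (x ∘ π.symm)) ↔
      (π = Equiv.refl ℕ ∧ ∃ e : ℚ ≃o ℚ, f = e ∘ h)) := by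
  have main1 : (∀ n m : ℕ, n ≠ m → (sierAdj f n m ↔ sierAdj h (π n) (π m))) ↔
      (π = Equiv.refl ℕ ∧ ∃ e : ℚ ≃o ℚ, f = e ∘ h) := by
    constructor
    · intro ha
      have step1 : ∀ n m : ℕ, n ≠ m → (f n < f m ↔ h (π n) < h (π m)) := by
        intro n m hnm
        rw [key_infinite f hf hnm, key_infinite h hh (π.injective.ne hnm)]
        constructor
        · intro hInf
          refine (hInf.image π.injective.injOn).mono ?_
          rintro j ⟨k, ⟨hk1, hk2, hk3, hk4⟩, rfl⟩
          exact ⟨fun hc => hk1 (π.injective hc), fun hc => hk2 (π.injective hc),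
            (ha k n hk1).1 hk3, fun hc => hk4 ((ha k m hk2).2 hc)⟩
        · intro hInf
          refine (hInf.image π.symm.injective.injOn).mono ?_
          rintro k ⟨j, ⟨hj1, hj2, hj3, hj4⟩, rfl⟩
          have hne1 : π.symm j ≠ n := fun hc => hj1 (by rw [← hc, Equiv.apply_symm_apply])
          have hne2 : π.symm j ≠ m := fun hc => hj2 (by rw [← hc, Equiv.apply_symm_apply])
          refine ⟨hne1, hne2, ?_, ?_⟩
          · exact (ha _ n hne1).2 (by rwa [Equiv.apply_symm_apply])
          · intro hc
            have := (ha _ m hne2).1 hc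
            rw [Equiv.apply_symm_apply] at this
            exact hj4 this
      have hmono : StrictMono ⇑π := by
        intro n m hnm
        have hne : n ≠ m := hnm.ne
        have hπne : π n ≠ π m := π.injective.ne hne
        rcases (hf.injective.ne hne).lt_or_gt with hflt | hflt
        · have hhlt := (step1 n m hne).1 hflt
          have hadj : sierAdj f n m := Or.inl ⟨hnm, hflt⟩
          rcases (ha n m hne).1 hadj with ⟨hc, _⟩ | ⟨_, hc⟩
          · exact hc
          · exact absurd hhlt (lt_asymm hc)
        · have hhlt := (step1 m n hne.symm).1 hflt
          have hnadj : ¬ sierAdj f n m := by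
            rintro (⟨_, hc⟩ | ⟨hc, _⟩)
            · exact absurd hc (lt_asymm hflt)
            · exact absurd hc (not_lt.mpr hnm.le)
          rcases hπne.lt_or_gt with hc | hc
          · exact hc
          · exact absurd (Or.inr ⟨hc, hhlt⟩) (fun hadj' => hnadj ((ha n m hne).2 hadj'))
      have hsm : StrictMono ⇑π.symm := by
        intro a b hab
        by_contra hcon
        push_neg at hcon
        have : b ≤ a := by
          have := hmono.monotone hcon
          rwa [Equiv.apply_symm_apply, Equiv.apply_symm_apply] at this
        exact absurd hab (not_lt.mpr this)
      have hπ : π = Equiv.refl ℕ := by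
        ext k
        have h1 : k ≤ π k := hmono.le_apply
        have h2 : π k ≤ k := by
          have := hsm.le_apply (x := π k)
          rwa [Equiv.symm_apply_apply] at this
        simpa using le_antisymm h2 h1
      have hfh : ∀ a b : ℕ, a ≠ b → (f a < f b ↔ h a < h b) := by
        intro a b hab
        have := step1 a b hab
        rwa [hπ, Equiv.refl_apply, Equiv.refl_apply] at this
      refine ⟨hπ, ?_⟩
      set g : ℚ → ℚ := f ∘ ⇑(Equiv.ofBijective h hh).symm with hg
      have hha : ∀ p : ℚ, h ((Equiv.ofBijective h hh).symm p) = p := fun p =>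
        Equiv.apply_symm_apply (Equiv.ofBijective h hh) p
      have hgm : StrictMono g := by
        intro p q hpq
        have hab : (Equiv.ofBijective h hh).symm p ≠ (Equiv.ofBijective h hh).symm q := by
          intro hc
          have : p = q := by rw [← hha p, ← hha q, hc]
          exact hpq.ne this
        have : h ((Equiv.ofBijective h hh).symm p) < h ((Equiv.ofBijective h hh).symm q) := by
          rw [hha, hha]; exact hpq
        exact (hfh _ _ hab).2 this
      have hgs : Function.Surjective g := hf.2.comp (Equiv.surjective _)
      refine ⟨StrictMono.orderIsoOfSurjective g hgm hgs, ?_⟩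
      funext x
      rw [Function.comp_apply, StrictMono.coe_orderIsoOfSurjective]
      show f x = f ((Equiv.ofBijective h hh).symm (h x))
      congr 1
      exact (Equiv.symm_apply_apply (Equiv.ofBijective h hh) x).symm
    · rintro ⟨hπ, e, hfe⟩
      have hiff : ∀ a b : ℕ, f a < f b ↔ h a < h b := by
        intro a b
        rw [hfe]
        simp only [Function.comp_apply]
        exact e.lt_iff_lt
      intro n m hnm
      rw [hπ]
      simp only [Equiv.refl_apply]
      exact or_congr (and_congr Iff.rfl (hiff n m)) (and_congr Iff.rfl (hiff m n))
  refine ⟨main1, ?_⟩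
  constructor
  · intro hb
    apply main1.1
    intro n m hnm
    have hfin : (Function.support (ind n m)).Finite := by
      apply ((Set.finite_singleton m).insert n).subset
      intro i hi
      simp only [Function.mem_support, ind] at hi
      by_contra hc
      simp only [Set.mem_insert_iff, Set.mem_singleton_iff] at hc
      push_neg at hc
      apply hi
      rw [if_neg]
      rintro (hc1 | hc2)
      · exact hc.1 hc1
      · exact hc.2 hc2
    have heq := hb (ind n m) hfin
    have hcomp : (ind n m) ∘ ⇑π.symm = ind (π n) (π m) := by
      funext j
      simp only [Function.comp_apply, ind]
      refine if_congr ?_ rfl rfl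
      rw [Equiv.symm_apply_eq, Equiv.symm_apply_eq]
    rw [hcomp] at heq
    rw [← norm_pair f hnm, ← norm_pair h (π.injective.ne hnm), heq]
  · rintro ⟨hπ, e, hfe⟩
    intro x hx
    have hiff : ∀ a b : ℕ, f a < f b ↔ h a < h b := by
      intro a b
      rw [hfe]
      simp only [Function.comp_apply]
      exact e.lt_iff_lt
    have hset : sierCliques f = sierCliques h := by
      ext F
      constructor
      · intro hF a ha b hb hab
        exact (hiff a b).1 (hF ha hb hab)
      · intro hF a ha b hb hab
        exact (hiff a b).2 (hF ha hb hab)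
    rw [hset, hπ]
    rfl
end

section
/- For all bijections f, h : ℕ → ℚ there exists a strictly increasing map φ : ℕ → ℕ such that for all n < m, h(n) < h(m) iff f(φ(n)) < f(φ(m)) (an increasing isomorphic embedding of G_h into G_f); consequently, for every x ∈ c₀₀, ‖x‖_{𝓒_h} = ‖x̃‖_{𝓒_f}, where x̃(φ(n)) = x(n) for all n and x̃ = 0 off the range of φ. -/
open scoped ENNReal

lemma step_exists (f h : ℕ → ℚ) (hf : Function.Bijective f) (hh : Function.Injective h)
    (ψ : ℕ → ℕ) (n : ℕ)
    (hmono : ∀ k l, k < l → l < n → ψ k < ψ l)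
    (hmatch : ∀ k l, k < l → l < n → (h k < h l ↔ f (ψ k) < f (ψ l))) :
    ∃ j, (∀ k < n, ψ k < j) ∧ (∀ k < n, (h k < h n ↔ f (ψ k) < f j)) := by
  have hfull : ∀ k l, k < n → l < n → h k < h l → f (ψ k) < f (ψ l) := by
    intro k l hk hl hkl
    rcases lt_trichotomy k l with hc | hc | hc
    · exact (hmatch k l hc hl).mp hkl
    · subst hc; exact absurd hkl (lt_irrefl _)
    · have h1 : ¬ h l < h k := not_lt_of_gt hkl
      have h2 : ¬ f (ψ l) < f (ψ k) := fun hc' => h1 ((hmatch l k hc hk).mpr hc')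
      have hne : f (ψ k) ≠ f (ψ l) := by
        intro he
        have := hf.1 he
        have := hmono l k hc hk
        omega
      exact lt_of_le_of_ne (not_lt.mp h2) hne
  set A : Finset ℕ := (Finset.range n).filter (fun k => h k < h n) with hA
  set B : Finset ℕ := (Finset.range n).filter (fun k => h n < h k) with hB
  obtain ⟨a, b, hab, hS⟩ : ∃ a b : ℚ, a < b ∧ ∀ q, a < q → q < b →
      (∀ k < n, h k < h n → f (ψ k) < q) ∧ (∀ k < n, h n < h k → q < f (ψ k)) := by
    by_cases hAne : A.Nonempty <;> by_cases hBne : B.Nonempty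
    · obtain ⟨k0, hk0A, hk0max⟩ := A.exists_max_image (fun k => f (ψ k)) hAne
      obtain ⟨k1, hk1B, hk1min⟩ := B.exists_min_image (fun k => f (ψ k)) hBne
      simp only [hA, hB, Finset.mem_filter, Finset.mem_range] at hk0A hk1B
      refine ⟨f (ψ k0), f (ψ k1), hfull k0 k1 hk0A.1 hk1B.1 (hk0A.2.trans hk1B.2), ?_⟩
      intro q hq1 hq2
      constructor
      · intro k hk hkn
        have : k ∈ A := by simp [hA, Finset.mem_filter, Finset.mem_range, hk, hkn]
        exact lt_of_le_of_lt (hk0max k this) hq1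
      · intro k hk hkn
        have : k ∈ B := by simp [hB, Finset.mem_filter, Finset.mem_range, hk, hkn]
        exact lt_of_lt_of_le hq2 (hk1min k this)
    · obtain ⟨k0, hk0A, hk0max⟩ := A.exists_max_image (fun k => f (ψ k)) hAne
      refine ⟨f (ψ k0), f (ψ k0) + 1, by linarith, ?_⟩
      intro q hq1 _
      constructor
      · intro k hk hkn
        have : k ∈ A := by simp [hA, Finset.mem_filter, Finset.mem_range, hk, hkn]
        exact lt_of_le_of_lt (hk0max k this) hq1
      · intro k hk hkn
        exact absurd ⟨k, by simp [hB, Finset.mem_filter, Finset.mem_range, hk, hkn]⟩ hBne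
    · obtain ⟨k1, hk1B, hk1min⟩ := B.exists_min_image (fun k => f (ψ k)) hBne
      refine ⟨f (ψ k1) - 1, f (ψ k1), by linarith, ?_⟩
      intro q _ hq2
      constructor
      · intro k hk hkn
        exact absurd ⟨k, by simp [hA, Finset.mem_filter, Finset.mem_range, hk, hkn]⟩ hAne
      · intro k hk hkn
        have : k ∈ B := by simp [hB, Finset.mem_filter, Finset.mem_range, hk, hkn]
        exact lt_of_lt_of_le hq2 (hk1min k this)
    · refine ⟨0, 1, by norm_num, ?_⟩
      intro q _ _
      constructor
      · intro k hk hkn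
        exact absurd ⟨k, by simp [hA, Finset.mem_filter, Finset.mem_range, hk, hkn]⟩ hAne
      · intro k hk hkn
        exact absurd ⟨k, by simp [hB, Finset.mem_filter, Finset.mem_range, hk, hkn]⟩ hBne
  have hIoo : (Set.Ioo a b).Infinite := Set.Ioo_infinite hab
  have hpre : (f ⁻¹' Set.Ioo a b).Infinite :=
    hIoo.preimage (by rw [hf.2.range_eq]; exact Set.subset_univ _)
  obtain ⟨j, hjmem, hjgt⟩ := hpre.exists_gt ((Finset.range n).sup ψ)
  have hjIoo : f j ∈ Set.Ioo a b := hjmem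
  obtain ⟨hfj1, hfj2⟩ := hS (f j) hjIoo.1 hjIoo.2
  refine ⟨j, ?_, ?_⟩
  · intro k hk
    exact lt_of_le_of_lt (Finset.le_sup (Finset.mem_range.mpr hk)) hjgt
  · intro k hk
    constructor
    · exact hfj1 k hk
    · intro hlt
      rcases lt_trichotomy (h k) (h n) with hc | hc | hc
      · exact hc
      · exact absurd (hh hc) (by omega)
      · exact absurd hlt (lt_asymm (hfj2 k hk hc))

open Classical in
noncomputable def sierStep (f h : ℕ → ℚ) (ψ : ℕ → ℕ) (n : ℕ) : ℕ :=
  if hP : ∃ j, (∀ k < n, ψ k < j) ∧ (∀ k < n, (h k < h n ↔ f (ψ k) < f j)) then hP.choose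
  else 0

noncomputable def sierPhi (f h : ℕ → ℚ) (n : ℕ) : ℕ :=
  sierStep f h (fun k => if hk : k < n then sierPhi f h k else 0) n
termination_by n
decreasing_by exact hk

lemma sierPhi_spec (f h : ℕ → ℚ) (hf : Function.Bijective f) (hh : Function.Injective h) :
    ∀ n, ∀ k, k < n →
      sierPhi f h k < sierPhi f h n ∧
        (h k < h n ↔ f (sierPhi f h k) < f (sierPhi f h n)) := by
  intro n
  induction n using Nat.strong_induction_on with
  | _ n ih =>
    set ψ : ℕ → ℕ := fun k => if hk : k < n then sierPhi f h k else 0 with hψ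
    have hψeq : ∀ k, k < n → ψ k = sierPhi f h k := by
      intro k hk; simp [hψ, hk]
    have hmono : ∀ k l, k < l → l < n → ψ k < ψ l := by
      intro k l hkl hl
      rw [hψeq k (hkl.trans hl), hψeq l hl]
      exact (ih l hl k hkl).1
    have hmatch : ∀ k l, k < l → l < n → (h k < h l ↔ f (ψ k) < f (ψ l)) := by
      intro k l hkl hl
      rw [hψeq k (hkl.trans hl), hψeq l hl]
      exact (ih l hl k hkl).2
    have hP : ∃ j, (∀ k < n, ψ k < j) ∧ (∀ k < n, (h k < h n ↔ f (ψ k) < f j)) :=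
      step_exists f h hf hh ψ n hmono hmatch
    have heq : sierPhi f h n = hP.choose := by
      rw [sierPhi, ← hψ, sierStep, dif_pos hP]
    intro k hk
    obtain ⟨h1, h2⟩ := hP.choose_spec
    rw [heq]
    refine ⟨?_, ?_⟩
    · rw [← hψeq k hk]; exact h1 k hk
    · rw [← hψeq k hk]; exact h2 k hk

theorem stmt_9 (f h : ℕ → ℚ) (hf : Function.Bijective f) (hh : Function.Bijective h) :
    ∃ φ : ℕ → ℕ, StrictMono φ ∧
      (∀ n m : ℕ, n < m → (h n < h m ↔ f (φ n) < f (φ m))) ∧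
      ∀ x : ℕ → ℝ, (Function.support x).Finite →
        combNorm (sierCliques h) x =
          combNorm (sierCliques f) (Function.extend φ x fun _ => 0) := by
  set φ := sierPhi f h with hφdef
  have spec := sierPhi_spec f h hf hh.1
  have hφmono : StrictMono φ := fun k n hkn => (spec n k hkn).1
  have hφinj : Function.Injective φ := hφmono.injective
  have hφmatch : ∀ n m : ℕ, n < m → (h n < h m ↔ f (φ n) < f (φ m)) :=
    fun n m hnm => (spec m n hnm).2
  refine ⟨φ, hφmono, hφmatch, ?_⟩
  intro x _
  set x' : ℕ → ℝ := Function.extend φ x fun _ => 0 with hx'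
  have hx'app : ∀ n, x' (φ n) = x n := fun n => hφinj.extend_apply x _ n
  apply le_antisymm
  · refine iSup₂_le fun S hS => ?_
    have hT : (S.image φ) ∈ sierCliques f := by
      intro a ha b hb hab
      simp only [Finset.coe_image, Set.mem_image, Finset.mem_coe] at ha hb
      obtain ⟨p, hp, rfl⟩ := ha
      obtain ⟨q, hq, rfl⟩ := hb
      have hpq : p < q := hφmono.lt_iff_lt.mp hab
      exact (hφmatch p q hpq).mp (hS hp hq hpq)
    refine le_iSup₂_of_le (S.image φ) hT (le_of_eq ?_)
    congr 1
    rw [Finset.sum_image (fun a _ b _ hab => hφinj hab)]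
    exact Finset.sum_congr rfl fun n _ => by rw [hx'app n]
  · refine iSup₂_le fun T hT => ?_
    set S : Finset ℕ := T.preimage φ (hφinj.injOn) with hSdef
    have hSmem : ∀ {k}, k ∈ S ↔ φ k ∈ T := by
      intro k; simp [hSdef, Finset.mem_preimage]
    have hScl : S ∈ sierCliques h := by
      intro a ha b hb hab
      simp only [Finset.mem_coe] at ha hb
      exact (hφmatch a b hab).mpr
        (hT (hSmem.mp ha) (hSmem.mp hb) (hφmono hab))
    refine le_iSup₂_of_le S hScl (le_of_eq ?_)
    congr 1
    have himg : S.image φ ⊆ T := by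
      intro i hi
      obtain ⟨n, hn, rfl⟩ := Finset.mem_image.mp hi
      exact hSmem.mp hn
    rw [← Finset.sum_subset himg]
    · rw [Finset.sum_image (fun a _ b _ hab => hφinj hab)]
      exact Finset.sum_congr rfl fun n _ => by rw [hx'app n]
    · intro i hiT hinot
      have hnr : ¬∃ n, φ n = i := by
        rintro ⟨n, rfl⟩
        exact hinot (Finset.mem_image_of_mem φ (hSmem.mpr hiT))
      simp [hx', Function.extend_apply' _ _ _ hnr]
end

section
/- For all bijections f, h : ℕ → ℚ there exists a permutation ρ of ℕ such that for every x ∈ c₀₀, ‖x‖_{𝓒_f} ≤ 2·‖x ∘ ρ⁻¹‖_{𝓒_h} and ‖x ∘ ρ⁻¹‖_{𝓒_h} ≤ 2·‖x‖_{𝓒_f}; that is, the canonical bases (e_{f,n}) and (e_{h,n}) are permutatively equivalent, so all Sierpiński spaces are isomorphic. -/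
open scoped ENNReal

lemma le_foldr_max (l : List ℕ) (x : ℕ) (hx : x ∈ l) : x ≤ l.foldr max 0 := by
  induction l with
  | nil => simp at hx
  | cons a l ih =>
    rcases List.mem_cons.mp hx with rfl | hx
    · exact le_max_left _ _
    · exact le_trans (ih hx) (le_max_right _ _)

noncomputable def freshIdx (L : List (ℕ × ℕ)) : ℕ := sInf {i | ∀ p ∈ L, p.1 ≠ i}

open Classical in
noncomputable def pickM (f h : ℕ → ℚ) (L : List (ℕ × ℕ)) : ℕ :=
  if H : ∃ m, (L.map Prod.snd).foldr max 0 < m ∧ ∀ p ∈ L,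
      ((f (freshIdx L) < f p.1 ↔ h m < h p.2) ∧ (f p.1 < f (freshIdx L) ↔ h p.2 < h m))
  then H.choose else 0

noncomputable def pickPair (f h : ℕ → ℚ) (L : List (ℕ × ℕ)) : ℕ × ℕ :=
  (freshIdx L, pickM f h L)

lemma exists_compatible (f h : ℕ → ℚ) (hfi : Function.Injective f)
    (hhs : Function.Surjective h)
    (L : List (ℕ × ℕ))
    (hGood : ∀ p ∈ L, ∀ q ∈ L, (f p.1 < f q.1 ↔ h p.2 < h q.2))
    (n : ℕ) (hn : ∀ p ∈ L, p.1 ≠ n) (B : ℕ) :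
    ∃ m, B < m ∧ ∀ p ∈ L, ((f n < f p.1 ↔ h m < h p.2) ∧ (f p.1 < f n ↔ h p.2 < h m)) := by
  classical
  set los : Finset ℚ := (L.toFinset.filter (fun p => f p.1 < f n)).image (fun p => h p.2) with hlos
  set ups : Finset ℚ := (L.toFinset.filter (fun p => f n < f p.1)).image (fun p => h p.2) with hups
  have hmemlos : ∀ p ∈ L, f p.1 < f n → h p.2 ∈ los := by
    intro p hp hlt
    exact Finset.mem_image.mpr ⟨p, Finset.mem_filter.mpr ⟨List.mem_toFinset.mpr hp, hlt⟩, rfl⟩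
  have hmemups : ∀ p ∈ L, f n < f p.1 → h p.2 ∈ ups := by
    intro p hp hlt
    exact Finset.mem_image.mpr ⟨p, Finset.mem_filter.mpr ⟨List.mem_toFinset.mpr hp, hlt⟩, rfl⟩
  obtain ⟨A, Bq, hAB, hA, hB⟩ :
      ∃ A Bq : ℚ, A < Bq ∧ (∀ a ∈ los, a ≤ A) ∧ (∀ b ∈ ups, Bq ≤ b) := by
    by_cases hlo : los.Nonempty <;> by_cases hup : ups.Nonempty
    · refine ⟨los.max' hlo, ups.min' hup, ?_, fun a ha => Finset.le_max' _ _ ha,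
        fun b hb => Finset.min'_le _ _ hb⟩
      obtain ⟨p, hp, hpe⟩ := Finset.mem_image.mp (los.max'_mem hlo)
      obtain ⟨q, hq, hqe⟩ := Finset.mem_image.mp (ups.min'_mem hup)
      rw [Finset.mem_filter] at hp hq
      have : f p.1 < f q.1 := lt_trans hp.2 hq.2
      have := (hGood p (List.mem_toFinset.mp hp.1) q (List.mem_toFinset.mp hq.1)).mp this
      rw [hpe, hqe] at this; exact this
    · exact ⟨los.max' hlo, los.max' hlo + 1, lt_add_one _,
        fun a ha => Finset.le_max' _ _ ha, fun b hb => absurd ⟨b, hb⟩ hup⟩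
    · exact ⟨ups.min' hup - 1, ups.min' hup, by linarith,
        fun a ha => absurd ⟨a, ha⟩ hlo, fun b hb => Finset.min'_le _ _ hb⟩
    · exact ⟨0, 1, by norm_num, fun a ha => absurd ⟨a, ha⟩ hlo, fun b hb => absurd ⟨b, hb⟩ hup⟩
  have hval : ∀ r ∈ Set.Ioo A Bq, ∀ p ∈ L,
      ((f n < f p.1 ↔ r < h p.2) ∧ (f p.1 < f n ↔ h p.2 < r)) := by
    rintro r ⟨hr1, hr2⟩ p hp
    rcases lt_trichotomy (f p.1) (f n) with hlt | heq | hgt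
    · have h1 : h p.2 < r := lt_of_le_of_lt (hA _ (hmemlos p hp hlt)) hr1
      exact ⟨⟨fun hc => absurd hlt (not_lt.mpr hc.le), fun hc => absurd h1 (not_lt.mpr hc.le)⟩,
        ⟨fun _ => h1, fun _ => hlt⟩⟩
    · exact absurd (hfi heq) (hn p hp)
    · have h1 : r < h p.2 := lt_of_lt_of_le hr2 (hB _ (hmemups p hp hgt))
      exact ⟨⟨fun _ => h1, fun _ => hgt⟩,
        ⟨fun hc => absurd hgt (not_lt.mpr hc.le), fun hc => absurd h1 (not_lt.mpr hc.le)⟩⟩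
  have hinf : (h ⁻¹' Set.Ioo A Bq).Infinite :=
    (Set.Ioo_infinite hAB).preimage (fun x _ => hhs x)
  have hex : ∃ m ∈ h ⁻¹' Set.Ioo A Bq, B < m := by
    by_contra hcon
    push_neg at hcon
    exact hinf (Set.Finite.subset (Set.finite_Iic B) (fun m hm => hcon m hm))
  obtain ⟨m, hm, hBm⟩ := hex
  exact ⟨m, hBm, hval (h m) hm⟩

lemma freshIdx_spec (L : List (ℕ × ℕ)) :
    (∀ p ∈ L, p.1 ≠ freshIdx L) ∧ (∀ i < freshIdx L, ∃ p ∈ L, p.1 = i) := by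
  have hne : {i | ∀ p ∈ L, p.1 ≠ i}.Nonempty := by
    refine ⟨(L.map Prod.fst).foldr max 0 + 1, fun p hp => ?_⟩
    have := le_foldr_max (L.map Prod.fst) p.1 (List.mem_map_of_mem (f := Prod.fst) hp)
    omega
  constructor
  · exact Nat.sInf_mem hne
  · intro i hi
    by_contra hcon
    push_neg at hcon
    have hmem : i ∈ {i | ∀ p ∈ L, p.1 ≠ i} := fun p hp => hcon p hp
    unfold freshIdx at hi
    exact absurd (Nat.sInf_le hmem) (by omega)

lemma pickPair_spec (f h : ℕ → ℚ) (hfi : Function.Injective f) (hhs : Function.Surjective h)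
    (L : List (ℕ × ℕ))
    (hGood : ∀ p ∈ L, ∀ q ∈ L, (f p.1 < f q.1 ↔ h p.2 < h q.2)) :
    (∀ p ∈ L, p.1 ≠ (pickPair f h L).1) ∧
    (∀ i < (pickPair f h L).1, ∃ p ∈ L, p.1 = i) ∧
    (∀ p ∈ L, p.2 < (pickPair f h L).2) ∧
    (∀ p ∈ L, ((f (pickPair f h L).1 < f p.1 ↔ h (pickPair f h L).2 < h p.2) ∧
      (f p.1 < f (pickPair f h L).1 ↔ h p.2 < h (pickPair f h L).2))) := by
  obtain ⟨hfresh, hleast⟩ := freshIdx_spec L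
  have H : ∃ m, (L.map Prod.snd).foldr max 0 < m ∧ ∀ p ∈ L,
      ((f (freshIdx L) < f p.1 ↔ h m < h p.2) ∧ (f p.1 < f (freshIdx L) ↔ h p.2 < h m)) :=
    exists_compatible f h hfi hhs L hGood (freshIdx L) hfresh _
  have hm : pickM f h L = H.choose := by rw [pickM, dif_pos H]
  have hspec := H.choose_spec
  rw [← hm] at hspec
  refine ⟨hfresh, hleast, ?_, hspec.2⟩
  intro p hp
  have h1 : p.2 ≤ (L.map Prod.snd).foldr max 0 :=
    le_foldr_max _ _ (List.mem_map_of_mem (f := Prod.snd) hp)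
  exact lt_of_le_of_lt h1 hspec.1

noncomputable def Ls (f h : ℕ → ℚ) : ℕ → List (ℕ × ℕ)
  | 0 => []
  | k + 1 => Ls f h k ++
      [if k % 2 = 0 then pickPair f h (Ls f h k)
       else (pickPair h f ((Ls f h k).map Prod.swap)).swap]

noncomputable def pr (f h : ℕ → ℚ) (k : ℕ) : ℕ × ℕ :=
  if k % 2 = 0 then pickPair f h (Ls f h k)
  else (pickPair h f ((Ls f h k).map Prod.swap)).swap

lemma Ls_succ (f h : ℕ → ℚ) (k : ℕ) : Ls f h (k + 1) = Ls f h k ++ [pr f h k] := rfl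

lemma mem_Ls (f h : ℕ → ℚ) (k : ℕ) (p : ℕ × ℕ) :
    p ∈ Ls f h k ↔ ∃ j < k, pr f h j = p := by
  induction k with
  | zero => simp [Ls]
  | succ k ih =>
    rw [Ls_succ, List.mem_append, ih]
    simp only [List.mem_singleton]
    constructor
    · rintro (⟨j, hj, rfl⟩ | rfl)
      · exact ⟨j, by omega, rfl⟩
      · exact ⟨k, by omega, rfl⟩
    · rintro ⟨j, hj, rfl⟩
      rcases Nat.lt_succ_iff_lt_or_eq.mp hj with hj | rfl
      · exact Or.inl ⟨j, hj, rfl⟩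
      · exact Or.inr rfl

lemma pr_mem_Ls (f h : ℕ → ℚ) {j k : ℕ} (hjk : j < k) : pr f h j ∈ Ls f h k :=
  (mem_Ls f h k _).mpr ⟨j, hjk, rfl⟩

def Good (f h : ℕ → ℚ) (L : List (ℕ × ℕ)) : Prop :=
  ∀ p ∈ L, ∀ q ∈ L, (f p.1 < f q.1 ↔ h p.2 < h q.2)

lemma good_swap (f h : ℕ → ℚ) (L : List (ℕ × ℕ)) (hG : Good f h L) :
    Good h f (L.map Prod.swap) := by
  intro p hp q hq
  obtain ⟨p0, hp0, rfl⟩ := List.mem_map.mp hp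
  obtain ⟨q0, hq0, rfl⟩ := List.mem_map.mp hq
  exact (hG p0 hp0 q0 hq0).symm

lemma step_spec (f h : ℕ → ℚ) (hf : Function.Bijective f) (hh : Function.Bijective h)
    (k : ℕ) (hG : Good f h (Ls f h k)) :
    (∀ q ∈ Ls f h k, ((f (pr f h k).1 < f q.1 ↔ h (pr f h k).2 < h q.2) ∧
        (f q.1 < f (pr f h k).1 ↔ h q.2 < h (pr f h k).2))) ∧
    (k % 2 = 0 → (∀ q ∈ Ls f h k, q.1 ≠ (pr f h k).1) ∧
        (∀ i < (pr f h k).1, ∃ q ∈ Ls f h k, q.1 = i) ∧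
        (∀ q ∈ Ls f h k, q.2 < (pr f h k).2)) ∧
    (k % 2 = 1 → (∀ q ∈ Ls f h k, q.2 ≠ (pr f h k).2) ∧
        (∀ i < (pr f h k).2, ∃ q ∈ Ls f h k, q.2 = i) ∧
        (∀ q ∈ Ls f h k, q.1 < (pr f h k).1)) := by
  by_cases hk : k % 2 = 0
  · have hpr : pr f h k = pickPair f h (Ls f h k) := by rw [pr, if_pos hk]
    obtain ⟨s1, s2, s3, s4⟩ := pickPair_spec f h hf.1 hh.2 (Ls f h k) hG
    rw [hpr]
    refine ⟨s4, fun _ => ⟨s1, s2, s3⟩, fun hk1 => absurd hk1 (by omega)⟩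
  · have hk1 : k % 2 = 1 := by omega
    have hpr : pr f h k = (pickPair h f ((Ls f h k).map Prod.swap)).swap := by
      rw [pr, if_neg hk]
    obtain ⟨s1, s2, s3, s4⟩ := pickPair_spec h f hh.1 hf.2 ((Ls f h k).map Prod.swap)
      (good_swap f h _ hG)
    rw [hpr]
    refine ⟨?_, fun hk0 => absurd hk0 hk, fun _ => ⟨?_, ?_, ?_⟩⟩
    · intro q hq
      have hqs := s4 q.swap (List.mem_map_of_mem (f := Prod.swap) hq)
      simp only [Prod.fst_swap, Prod.snd_swap] at hqs ⊢
      exact ⟨(hqs.1).symm, (hqs.2).symm⟩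
    · intro q hq
      have := s1 q.swap (List.mem_map_of_mem (f := Prod.swap) hq)
      simpa using this
    · intro i hi
      simp only [Prod.snd_swap] at hi
      obtain ⟨p, hp, hpi⟩ := s2 i hi
      obtain ⟨q0, hq0, rfl⟩ := List.mem_map.mp hp
      exact ⟨q0, hq0, hpi⟩
    · intro q hq
      have := s3 q.swap (List.mem_map_of_mem (f := Prod.swap) hq)
      simpa using this

lemma good_Ls (f h : ℕ → ℚ) (hf : Function.Bijective f) (hh : Function.Bijective h) :
    ∀ k, Good f h (Ls f h k) := by
  intro k
  induction k with
  | zero => intro p hp; simp [Ls] at hp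
  | succ k ih =>
    have hC := (step_spec f h hf hh k ih).1
    intro p hp q hq
    rw [Ls_succ, List.mem_append, List.mem_singleton] at hp hq
    rcases hp with hp | rfl <;> rcases hq with hq | rfl
    · exact ih p hp q hq
    · exact ⟨fun hlt => ((hC p hp).2.mp hlt), fun hlt => ((hC p hp).2.mpr hlt)⟩
    · exact (hC q hq).1
    · simp

section Seq
variable (f h : ℕ → ℚ) (hf : Function.Bijective f) (hh : Function.Bijective h)

include hf hh

lemma neq_pr {j k : ℕ} (hjk : j < k) :
    (pr f h j).1 ≠ (pr f h k).1 ∧ (pr f h j).2 ≠ (pr f h k).2 := by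
  have hmem := pr_mem_Ls f h hjk
  have hs := step_spec f h hf hh k (good_Ls f h hf hh k)
  by_cases hk : k % 2 = 0
  · obtain ⟨s1, s2, s3⟩ := hs.2.1 hk
    exact ⟨s1 _ hmem, ne_of_lt (s3 _ hmem)⟩
  · obtain ⟨s1, s2, s3⟩ := hs.2.2 (by omega)
    exact ⟨ne_of_lt (s3 _ hmem), s1 _ hmem⟩

lemma mono_even {j k : ℕ} (hjk : j < k) (hj : j % 2 = 0) (hk : k % 2 = 0) :
    (pr f h j).1 < (pr f h k).1 ∧ (pr f h j).2 < (pr f h k).2 := by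
  have hmem := pr_mem_Ls f h hjk
  have hsk := (step_spec f h hf hh k (good_Ls f h hf hh k)).2.1 hk
  refine ⟨?_, hsk.2.2 _ hmem⟩
  have hne := (neq_pr f h hf hh hjk).1
  rcases lt_or_gt_of_ne hne with hlt | hgt
  · exact hlt
  · exfalso
    have hsj := (step_spec f h hf hh j (good_Ls f h hf hh j)).2.1 hj
    obtain ⟨q, hq, hq1⟩ := hsj.2.1 _ hgt
    obtain ⟨t, htj, rfl⟩ := (mem_Ls f h j q).mp hq
    exact hsk.1 _ (pr_mem_Ls f h (htj.trans hjk)) hq1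

lemma mono_odd {j k : ℕ} (hjk : j < k) (hj : j % 2 = 1) (hk : k % 2 = 1) :
    (pr f h j).1 < (pr f h k).1 ∧ (pr f h j).2 < (pr f h k).2 := by
  have hmem := pr_mem_Ls f h hjk
  have hsk := (step_spec f h hf hh k (good_Ls f h hf hh k)).2.2 hk
  refine ⟨hsk.2.2 _ hmem, ?_⟩
  have hne := (neq_pr f h hf hh hjk).2
  rcases lt_or_gt_of_ne hne with hlt | hgt
  · exact hlt
  · exfalso
    have hsj := (step_spec f h hf hh j (good_Ls f h hf hh j)).2.2 hj
    obtain ⟨q, hq, hq1⟩ := hsj.2.1 _ hgt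
    obtain ⟨t, htj, rfl⟩ := (mem_Ls f h j q).mp hq
    exact hsk.1 _ (pr_mem_Ls f h (htj.trans hjk)) hq1

lemma compat_pr (i j : ℕ) :
    (f (pr f h i).1 < f (pr f h j).1 ↔ h (pr f h i).2 < h (pr f h j).2) := by
  rcases lt_trichotomy i j with hij | rfl | hij
  · have := good_Ls f h hf hh (j + 1)
    exact this _ (pr_mem_Ls f h (by omega)) _ (pr_mem_Ls f h (by omega))
  · simp
  · have := good_Ls f h hf hh (i + 1)
    exact this _ (pr_mem_Ls f h (by omega)) _ (pr_mem_Ls f h (by omega))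

lemma inj_fst : Function.Injective (fun k => (pr f h k).1) := by
  intro j k hjk
  by_contra hne
  rcases lt_or_gt_of_ne hne with hlt | hgt
  · exact (neq_pr f h hf hh hlt).1 hjk
  · exact (neq_pr f h hf hh hgt).1 hjk.symm

lemma inj_snd : Function.Injective (fun k => (pr f h k).2) := by
  intro j k hjk
  by_contra hne
  rcases lt_or_gt_of_ne hne with hlt | hgt
  · exact (neq_pr f h hf hh hlt).2 hjk
  · exact (neq_pr f h hf hh hgt).2 hjk.symm

lemma grow_fst : ∀ t, t ≤ (pr f h (2 * t)).1 := by
  intro t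
  induction t with
  | zero => omega
  | succ t ih =>
    have := (mono_even f h hf hh (j := 2 * t) (k := 2 * (t + 1)) (by omega) (by omega) (by omega)).1
    omega

lemma grow_snd : ∀ t, t ≤ (pr f h (2 * t + 1)).2 := by
  intro t
  induction t with
  | zero => omega
  | succ t ih =>
    have := (mono_odd f h hf hh (j := 2 * t + 1) (k := 2 * (t + 1) + 1) (by omega) (by omega) (by omega)).2
    omega

lemma surj_fst : Function.Surjective (fun k => (pr f h k).1) := by
  intro n
  by_contra hcon
  push_neg at hcon
  have hk : 2 * (n + 1) % 2 = 0 := by omega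
  have hs := (step_spec f h hf hh (2 * (n + 1)) (good_Ls f h hf hh _)).2.1 hk
  have hle : (pr f h (2 * (n + 1))).1 ≤ n := by
    by_contra hgt
    obtain ⟨q, hq, hq1⟩ := hs.2.1 n (by omega)
    obtain ⟨t, _, rfl⟩ := (mem_Ls f h _ q).mp hq
    exact hcon t hq1
  have := grow_fst f h hf hh (n + 1)
  omega

lemma surj_snd : Function.Surjective (fun k => (pr f h k).2) := by
  intro n
  by_contra hcon
  push_neg at hcon
  have hk : (2 * (n + 1) + 1) % 2 = 1 := by omega
  have hs := (step_spec f h hf hh (2 * (n + 1) + 1) (good_Ls f h hf hh _)).2.2 hk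
  have hle : (pr f h (2 * (n + 1) + 1)).2 ≤ n := by
    by_contra hgt
    obtain ⟨q, hq, hq1⟩ := hs.2.1 n (by omega)
    obtain ⟨t, _, rfl⟩ := (mem_Ls f h _ q).mp hq
    exact hcon t hq1
  have := grow_snd f h hf hh (n + 1)
  omega

end Seq

lemma norm_pair_s10 (f h : ℕ → ℚ) (ρ : Equiv.Perm ℕ)
    (Q1 : ∀ n n', f n < f n' ↔ h (ρ n) < h (ρ n'))
    (Dp : ℕ → Prop)
    (MD : ∀ n n', Dp n → Dp n' → n < n' → ρ n < ρ n')
    (ME : ∀ n n', ¬Dp n → ¬Dp n' → n < n' → ρ n < ρ n')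
    (x : ℕ → ℝ) :
    combNorm (sierCliques f) x ≤ 2 * combNorm (sierCliques h) (x ∘ ρ.symm) ∧
    combNorm (sierCliques h) (x ∘ ρ.symm) ≤ 2 * combNorm (sierCliques f) x := by
  classical
  have habs : ∀ (T : Finset ℕ), (0:ℝ) ≤ ∑ i ∈ T, |x i| :=
    fun T => Finset.sum_nonneg fun i _ => abs_nonneg _
  have habs' : ∀ (T : Finset ℕ), (0:ℝ) ≤ ∑ i ∈ T, |(x ∘ ρ.symm) i| :=
    fun T => Finset.sum_nonneg fun i _ => abs_nonneg _
  constructor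
  · refine iSup₂_le fun S hS => ?_
    have key : ∀ (T : Finset ℕ), T ⊆ S → ((∀ n ∈ T, Dp n) ∨ (∀ n ∈ T, ¬Dp n)) →
        ENNReal.ofReal (∑ i ∈ T, |x i|) ≤ combNorm (sierCliques h) (x ∘ ρ.symm) := by
      intro T hTS hT
      have hclique : (T.image ρ) ∈ sierCliques h := by
        intro u hu v hv huv
        simp only [Finset.coe_image, Set.mem_image, Finset.mem_coe] at hu hv
        obtain ⟨n, hn, rfl⟩ := hu
        obtain ⟨n', hn', rfl⟩ := hv
        have hnn' : n < n' := by
          rcases lt_trichotomy n n' with hlt | rfl | hgt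
          · exact hlt
          · exact absurd huv (lt_irrefl _)
          · exfalso
            rcases hT with hT | hT
            · exact absurd (MD _ _ (hT _ hn') (hT _ hn) hgt) (not_lt.mpr huv.le)
            · exact absurd (ME _ _ (hT _ hn') (hT _ hn) hgt) (not_lt.mpr huv.le)
        have hfv : f n < f n' := hS (Finset.mem_coe.mpr (hTS hn)) (Finset.mem_coe.mpr (hTS hn')) hnn'
        exact (Q1 n n').mp hfv
      have hsum : ∑ j ∈ T.image ρ, |(x ∘ ρ.symm) j| = ∑ i ∈ T, |x i| := by
        rw [Finset.sum_image (fun a _ c _ hac => ρ.injective hac)]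
        simp
      calc ENNReal.ofReal (∑ i ∈ T, |x i|)
          = ENNReal.ofReal (∑ j ∈ T.image ρ, |(x ∘ ρ.symm) j|) := by rw [hsum]
        _ ≤ combNorm (sierCliques h) (x ∘ ρ.symm) := by
            exact le_iSup₂ (f := fun S (_ : S ∈ sierCliques h) =>
              ENNReal.ofReal (∑ i ∈ S, |(x ∘ ρ.symm) i|)) (T.image ρ) hclique
    have hsplit : ∑ i ∈ S, |x i| =
        ∑ i ∈ S.filter (fun n => Dp n), |x i| + ∑ i ∈ S.filter (fun n => ¬ Dp n), |x i| :=
      (Finset.sum_filter_add_sum_filter_not S _ _).symm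
    rw [hsplit, ENNReal.ofReal_add (habs _) (habs _), two_mul]
    exact add_le_add
      (key _ (Finset.filter_subset _ _) (Or.inl fun n hn => (Finset.mem_filter.mp hn).2))
      (key _ (Finset.filter_subset _ _) (Or.inr fun n hn => (Finset.mem_filter.mp hn).2))
  · refine iSup₂_le fun S hS => ?_
    set U : Finset ℕ := S.image ρ.symm with hU
    have hUS : ∀ n ∈ U, ρ n ∈ S := by
      intro n hn
      obtain ⟨j, hj, rfl⟩ := Finset.mem_image.mp hn
      simpa using hj
    have key : ∀ (T : Finset ℕ), T ⊆ U → ((∀ n ∈ T, Dp n) ∨ (∀ n ∈ T, ¬Dp n)) →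
        ENNReal.ofReal (∑ i ∈ T, |x i|) ≤ combNorm (sierCliques f) x := by
      intro T hTU hT
      have hclique : T ∈ sierCliques f := by
        intro n hn n' hn' hnn'
        rw [Finset.mem_coe] at hn hn'
        have hρ : ρ n < ρ n' := by
          rcases hT with hT | hT
          · exact MD _ _ (hT _ hn) (hT _ hn') hnn'
          · exact ME _ _ (hT _ hn) (hT _ hn') hnn'
        have hhv : h (ρ n) < h (ρ n') :=
          hS (Finset.mem_coe.mpr (hUS _ (hTU hn))) (Finset.mem_coe.mpr (hUS _ (hTU hn'))) hρ
        exact (Q1 n n').mpr hhv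
      exact le_iSup₂ (f := fun S (_ : S ∈ sierCliques f) =>
        ENNReal.ofReal (∑ i ∈ S, |x i|)) T hclique
    have hsum : ∑ j ∈ S, |(x ∘ ρ.symm) j| = ∑ i ∈ U, |x i| := by
      rw [hU, Finset.sum_image (fun a _ c _ hac => ρ.symm.injective hac)]
      simp
    have hsplit : ∑ i ∈ U, |x i| =
        ∑ i ∈ U.filter (fun n => Dp n), |x i| + ∑ i ∈ U.filter (fun n => ¬ Dp n), |x i| :=
      (Finset.sum_filter_add_sum_filter_not U _ _).symm
    rw [hsum, hsplit, ENNReal.ofReal_add (habs _) (habs _), two_mul]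
    exact add_le_add
      (key _ (Finset.filter_subset _ _) (Or.inl fun n hn => (Finset.mem_filter.mp hn).2))
      (key _ (Finset.filter_subset _ _) (Or.inr fun n hn => (Finset.mem_filter.mp hn).2))

theorem stmt_10 (f h : ℕ → ℚ) (hf : Function.Bijective f) (hh : Function.Bijective h) :
    ∃ ρ : Equiv.Perm ℕ, ∀ x : ℕ → ℝ, (Function.support x).Finite →
      combNorm (sierCliques f) x ≤ 2 * combNorm (sierCliques h) (x ∘ ρ.symm) ∧
      combNorm (sierCliques h) (x ∘ ρ.symm) ≤ 2 * combNorm (sierCliques f) x := by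
  classical
  let ea : Equiv.Perm ℕ := Equiv.ofBijective (fun k => (pr f h k).1)
    ⟨inj_fst f h hf hh, surj_fst f h hf hh⟩
  let eb : Equiv.Perm ℕ := Equiv.ofBijective (fun k => (pr f h k).2)
    ⟨inj_snd f h hf hh, surj_snd f h hf hh⟩
  let ρ : Equiv.Perm ℕ := ea.symm.trans eb
  have haa : ∀ n, (pr f h (ea.symm n)).1 = n := fun n => ea.apply_symm_apply n
  have hρ : ∀ n, ρ n = (pr f h (ea.symm n)).2 := fun n => rfl
  have Q1 : ∀ n n', f n < f n' ↔ h (ρ n) < h (ρ n') := by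
    intro n n'
    have hc := compat_pr f h hf hh (ea.symm n) (ea.symm n')
    rw [haa n, haa n'] at hc
    rw [hρ n, hρ n']
    exact hc
  have MD : ∀ n n', (ea.symm n) % 2 = 0 → (ea.symm n') % 2 = 0 → n < n' → ρ n < ρ n' := by
    intro n n' hDn hDn' hlt
    have hij : ea.symm n < ea.symm n' := by
      rcases lt_trichotomy (ea.symm n) (ea.symm n') with hc | hc | hc
      · exact hc
      · exact absurd (ea.symm.injective hc) (by omega)
      · have := (mono_even f h hf hh hc hDn' hDn).1
        rw [haa n, haa n'] at this
        omega
    rw [hρ n, hρ n']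
    exact (mono_even f h hf hh hij hDn hDn').2
  have ME : ∀ n n', ¬((ea.symm n) % 2 = 0) → ¬((ea.symm n') % 2 = 0) → n < n' → ρ n < ρ n' := by
    intro n n' hDn hDn' hlt
    have hDn1 : (ea.symm n) % 2 = 1 := by omega
    have hDn'1 : (ea.symm n') % 2 = 1 := by omega
    have hij : ea.symm n < ea.symm n' := by
      rcases lt_trichotomy (ea.symm n) (ea.symm n') with hc | hc | hc
      · exact hc
      · exact absurd (ea.symm.injective hc) (by omega)
      · have := (mono_odd f h hf hh hc hDn'1 hDn1).1
        rw [haa n, haa n'] at this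
        omega
    rw [hρ n, hρ n']
    exact (mono_odd f h hf hh hij hDn1 hDn'1).2
  exact ⟨ρ, fun x _ => norm_pair_s10 f h ρ Q1 (fun n => (ea.symm n) % 2 = 0) MD ME x⟩
end

section
/- Let 𝓕 ∈ FHC, K ≥ 1, and let (x_n) be a sequence of finitely supported functions ℕ → ℝ with pairwise disjoint supports and ‖x_n‖_𝓕 = 1 for all n, such that for every a ∈ c₀₀, (1/K)·Σ_n |a(n)| ≤ ‖Σ_n a(n)·x_n‖_𝓕 (so (x_n) is K-equivalent to the canonical basis of ℓ₁, the upper ℓ₁-estimate being automatic). Then there exists A ∈ 𝓕̄ such that ‖P_A(x_n)‖_𝓕 > 1/(2K) for infinitely many n. -/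
open scoped ENNReal

/-- A family of finite subsets of ℕ which is hereditary and covers ℕ. -/
def FHC (F : Set (Finset ℕ)) : Prop :=
  (∀ ⦃E S : Finset ℕ⦄, E ⊆ S → S ∈ F → E ∈ F) ∧ (∀ n : ℕ, {n} ∈ F)

namespace S12

lemma finite_funs {β : Type*} (J : Finset ℕ) (T : ℕ → Finset β) (d : β) :
    {p : ℕ → β | (∀ n, n ∉ J → p n = d) ∧ ∀ n ∈ J, p n ∈ T n}.Finite := by
  classical
  induction J using Finset.induction_on with
  | empty =>
    apply Set.Finite.subset (Set.finite_singleton (fun _ => d))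
    rintro p ⟨h1, -⟩
    simp only [Set.mem_singleton_iff]
    funext n
    exact h1 n (Finset.notMem_empty n)
  | @insert a J' ha ih =>
    apply Set.Finite.subset (Set.Finite.image2 (fun b p => Function.update p a b)
      ((T a).finite_toSet) ih)
    rintro p ⟨h1, h2⟩
    refine Set.mem_image2.mpr ⟨p a, h2 a (Finset.mem_insert_self a J'),
      Function.update p a d, ⟨?_, ?_⟩, ?_⟩
    · intro n hn
      by_cases h : n = a
      · subst h; simp
      · rw [Function.update_of_ne h]
        exact h1 n (by simp [Finset.mem_insert, h, hn])
    · intro n hn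
      have hna : n ≠ a := fun h => ha (h ▸ hn)
      rw [Function.update_of_ne hna]
      exact h2 n (Finset.mem_insert_of_mem hn)
    · funext n
      by_cases h : n = a
      · subst h; simp
      · simp [Function.update_of_ne h]

variable {α : Type*}

def drop (step : ℕ → α → α) (k : ℕ) : ℕ → α → α
  | 0 => id
  | (j+1) => fun a => drop step k j (step (k+j) a)

lemma drop_zero (step : ℕ → α → α) (k : ℕ) (a : α) : drop step k 0 a = a := rfl

lemma drop_succ (step : ℕ → α → α) (k j : ℕ) (a : α) :
    drop step k (j+1) a = drop step k j (step (k+j) a) := rfl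

lemma drop_mem (L : ℕ → Set α) (step : ℕ → α → α)
    (hstep : ∀ k a, a ∈ L (k+1) → step k a ∈ L k) :
    ∀ j k a, a ∈ L (k+j) → drop step k j a ∈ L k := by
  intro j
  induction j with
  | zero => intro k a h; exact h
  | succ j ih =>
    intro k a h
    rw [drop_succ]
    exact ih k (step (k+j) a) (hstep (k+j) a h)

lemma drop_add (step : ℕ → α → α) :
    ∀ i j k a, drop step k j (drop step (k+j) i a) = drop step k (j+i) a := by
  intro i
  induction i with
  | zero => intro j k a; rfl
  | succ i ih =>
    intro j k a
    rw [drop_succ]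
    rw [show (k+j)+i = k+(j+i) from Nat.add_assoc k j i]
    rw [ih j k (step (k + (j+i)) a)]
    rfl

lemma drop_peel (step : ℕ → α → α) :
    ∀ j k a, drop step k (j+1) a = step k (drop step (k+1) j a) := by
  intro j
  induction j with
  | zero => intro k a; rfl
  | succ j ih =>
    intro k a
    rw [drop_succ, ih k (step (k + (j+1)) a)]
    rw [show k + (j+1) = (k+1)+j by omega]
    rfl

lemma exists_cofinal_fiber {s : Set α} (hs : s.Finite) (c : ℕ → α) (hc : ∀ j, c j ∈ s) :
    ∃ a ∈ s, ∀ j, ∃ j', j ≤ j' ∧ c j' = a := by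
  have : Finite s := hs.to_subtype
  obtain ⟨b, hb⟩ := Finite.exists_infinite_fiber (fun j => (⟨c j, hc j⟩ : s))
  have hb' : (Set.preimage (fun j => (⟨c j, hc j⟩ : s)) {b}).Infinite := Set.infinite_coe_iff.mp hb
  refine ⟨b.1, b.2, fun j => ?_⟩
  obtain ⟨j', hj'mem, hj'⟩ := hb'.exists_gt j
  refine ⟨j', le_of_lt hj', ?_⟩
  have : (⟨c j', hc j'⟩ : s) = b := hj'mem
  exact congrArg Subtype.val this

lemma koenig (L : ℕ → Set α) (hfin : ∀ k, (L k).Finite) (hne : ∀ k, (L k).Nonempty)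
    (step : ℕ → α → α) (hstep : ∀ k a, a ∈ L (k+1) → step k a ∈ L k) :
    ∃ f : ℕ → α, (∀ k, f k ∈ L k) ∧ ∀ k, step k (f (k+1)) = f k := by
  classical
  let good : ℕ → α → Prop := fun k a => a ∈ L k ∧ ∀ j, ∃ b ∈ L (k+j), drop step k j b = a
  have claim1 : ∃ a, good 0 a := by
    have hb : ∀ j, ∃ b, b ∈ L (0+j) := fun j => (hne (0+j)).imp (fun b hb => hb)
    choose b hbmem using hb
    have hcm : ∀ j, drop step 0 j (b j) ∈ L 0 := fun j => drop_mem L step hstep j 0 (b j) (hbmem j)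
    obtain ⟨a, haL, ha⟩ := exists_cofinal_fiber (hfin 0) (fun j => drop step 0 j (b j)) hcm
    refine ⟨a, haL, fun j => ?_⟩
    obtain ⟨j', hjj', hcj'⟩ := ha j
    refine ⟨drop step (0+j) (j'-j) (b j'), ?_, ?_⟩
    · exact drop_mem L step hstep (j'-j) (0+j) (b j')
        (by rw [show (0+j)+(j'-j) = 0+j' by omega]; exact hbmem j')
    · rw [drop_add step (j'-j) j 0 (b j'), show j + (j'-j) = j' by omega]
      exact hcj'
  have claim2 : ∀ k a, good k a → ∃ b, good (k+1) b ∧ step k b = a := by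
    intro k a ⟨haL, ha⟩
    have hb : ∀ j, ∃ b ∈ L (k+(j+1)), drop step k (j+1) b = a := fun j => ha (j+1)
    choose b hbmem hbdrop using hb
    have hcm : ∀ j, drop step (k+1) j (b j) ∈ L (k+1) := fun j =>
      drop_mem L step hstep j (k+1) (b j)
        (by rw [show (k+1)+j = k+(j+1) by omega]; exact hbmem j)
    have hcs : ∀ j, step k (drop step (k+1) j (b j)) = a := fun j => by
      rw [← drop_peel step j k (b j)]; exact hbdrop j
    obtain ⟨b', hbL, hbcf⟩ := exists_cofinal_fiber (hfin (k+1))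
      (fun j => drop step (k+1) j (b j)) hcm
    refine ⟨b', ⟨hbL, fun j => ?_⟩, ?_⟩
    · obtain ⟨j', hjj', hc⟩ := hbcf j
      refine ⟨drop step ((k+1)+j) (j'-j) (b j'), ?_, ?_⟩
      · exact drop_mem L step hstep (j'-j) ((k+1)+j) (b j')
          (by rw [show ((k+1)+j)+(j'-j) = k+(j'+1) by omega]; exact hbmem j')
      · rw [drop_add step (j'-j) j (k+1) (b j'), show j + (j'-j) = j' by omega]
        exact hc
    · obtain ⟨j', _, hc⟩ := hbcf 0
      rw [← hc]
      exact hcs j'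
  choose a0 ha0 using claim1
  choose nxt hnxt1 hnxt2 using claim2
  let F : (k : ℕ) → {a : α // good k a} := fun k =>
    Nat.rec ⟨a0, ha0⟩ (fun k' p => ⟨nxt k' p.1 p.2, hnxt1 k' p.1 p.2⟩) k
  refine ⟨fun k => (F k).1, fun k => (F k).2.1, fun k => ?_⟩
  exact hnxt2 k (F k).1 (F k).2


def pchild (q : ℕ) (G : Set (Finset ℕ)) : Set (Finset ℕ) :=
  {S | insert q S ∈ G ∧ ∀ i ∈ S, q < i}

def pHered (G : Set (Finset ℕ)) : Prop := ∀ ⦃E S : Finset ℕ⦄, E ⊆ S → S ∈ G → E ∈ G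

def pBranch (G : Set (Finset ℕ)) : Prop :=
  ∃ c : ℕ → ℕ, StrictMono c ∧ ∀ k, (Finset.range k).image c ∈ G

def pGood (G : Set (Finset ℕ)) : Prop := pHered G ∧ ¬ pBranch G

def prel (H G : Set (Finset ℕ)) : Prop :=
  pGood G ∧ ∃ Q : Finset ℕ, Q.Nonempty ∧ (∀ q ∈ Q, ({q} : Finset ℕ) ∈ G) ∧
    H = {S | ∃ q ∈ Q, S ∈ pchild q G}

theorem prel_wf : WellFounded prel := by
  classical
  constructor
  intro G₀
  by_contra hG₀
  have key : ∀ G, ¬ Acc prel G → ∃ H, prel H G ∧ ¬ Acc prel H := by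
    intro G hG
    by_contra hc
    push_neg at hc
    exact hG (Acc.intro G fun H hH => hc H hH)
  choose nxt hnxt1 hnxt2 using key
  let stepT : {G : Set (Finset ℕ) // ¬ Acc prel G} → {G : Set (Finset ℕ) // ¬ Acc prel G} :=
    fun t => ⟨nxt t.1 t.2, hnxt2 t.1 t.2⟩
  let gT : ℕ → {G : Set (Finset ℕ) // ¬ Acc prel G} := fun n => stepT^[n] ⟨G₀, hG₀⟩
  let gg : ℕ → Set (Finset ℕ) := fun n => (gT n).1
  have hchain : ∀ n, prel (gg (n+1)) (gg n) := by
    intro n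
    have h1 : gT (n+1) = stepT (gT n) := Function.iterate_succ_apply' _ _ _
    have h2 : gg (n+1) = nxt (gT n).1 (gT n).2 := by
      show (gT (n+1)).1 = _
      rw [h1]
    rw [h2]
    exact hnxt1 _ _
  have hgood : ∀ n, pGood (gg n) := fun n => (hchain n).1
  choose Q hQne hQs hQeq using fun n => (hchain n).2
  -- every member of gg k extends down to gg 0 through a chain
  have chainmem : ∀ k, ∀ S ∈ gg k, ∃ e : ℕ → ℕ,
      (∀ j, k ≤ j → e j = 0) ∧ (∀ j, j < k → e j ∈ Q j) ∧
      (∀ j1 j2, j1 < j2 → j2 < k → e j1 < e j2) ∧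
      (∀ j, j < k → ∀ s ∈ S, e j < s) ∧ ((Finset.range k).image e ∪ S ∈ gg 0) := by
    intro k
    induction k with
    | zero =>
      intro S hS
      refine ⟨fun _ => 0, fun _ _ => rfl, by omega, by omega, by omega, ?_⟩
      simpa using hS
    | succ k ih =>
      intro S hS
      rw [hQeq k] at hS
      obtain ⟨q, hqQ, hq1, hq2⟩ := hS
      obtain ⟨e, he0, heQ, hemono, helt, heim⟩ := ih (insert q S) hq1
      have hq_gt : ∀ j, j < k → e j < q := fun j hj => helt j hj q (Finset.mem_insert_self q S)
      refine ⟨fun j => if j = k then q else e j, ?_, ?_, ?_, ?_, ?_⟩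
      · intro j hj
        show (if j = k then q else e j) = 0
        rw [if_neg (by omega)]
        exact he0 j (by omega)
      · intro j hj
        show (if j = k then q else e j) ∈ Q j
        by_cases h : j = k
        · subst h; rw [if_pos rfl]; exact hqQ
        · rw [if_neg h]; exact heQ j (by omega)
      · intro j1 j2 h12 h2
        show (if j1 = k then q else e j1) < (if j2 = k then q else e j2)
        by_cases h : j2 = k
        · subst h
          rw [if_pos rfl, if_neg (by omega)]
          exact hq_gt j1 h12
        · rw [if_neg h, if_neg (by omega)]
          exact hemono j1 j2 h12 (by omega)
      · intro j hj s hs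
        show (if j = k then q else e j) < s
        by_cases h : j = k
        · subst h; rw [if_pos rfl]; exact hq2 s hs
        · rw [if_neg h]; exact helt j (by omega) s (Finset.mem_insert_of_mem hs)
      · have himg : (Finset.range (k+1)).image (fun j => if j = k then q else e j) ∪ S
            = (Finset.range k).image e ∪ insert q S := by
          rw [Finset.range_add_one, Finset.image_insert, if_pos rfl]
          have he : (Finset.range k).image (fun j => if j = k then q else e j)
              = (Finset.range k).image e := by
            apply Finset.image_congr
            intro j hj
            simp only [Finset.coe_range, Set.mem_Iio] at hj
            show (if j = k then q else e j) = e j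
            rw [if_neg (by omega)]
          rw [he, Finset.insert_union, Finset.union_insert]
        rw [himg]
        exact heim
  -- König levels
  let Lk : ℕ → Set (ℕ → ℕ) := fun k => {e | (∀ j, j ∉ Finset.range k → e j = 0) ∧
    (∀ j ∈ Finset.range k, e j ∈ Q j) ∧
    (∀ j1 j2, j1 < j2 → j2 < k → e j1 < e j2) ∧ (Finset.range k).image e ∈ gg 0}
  have hfinL : ∀ k, (Lk k).Finite := by
    intro k
    apply (finite_funs (Finset.range k) Q 0).subset
    rintro e ⟨h1, h2, -, -⟩
    exact ⟨h1, h2⟩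
  have hneL : ∀ k, (Lk k).Nonempty := by
    intro k
    obtain ⟨q, hq⟩ := hQne k
    obtain ⟨e, he0, heQ, hemono, helt, heim⟩ := chainmem k {q} (hQs k q hq)
    refine ⟨e, fun j hj => he0 j (by simpa using hj), fun j hj => heQ j (by simpa using hj),
      hemono, ?_⟩
    exact (hgood 0).1 Finset.subset_union_left heim
  let stp : ℕ → (ℕ → ℕ) → (ℕ → ℕ) := fun k e j => if j ∈ Finset.range k then e j else 0
  have hstp : ∀ k e, e ∈ Lk (k+1) → stp k e ∈ Lk k := by
    rintro k e ⟨h1, h2, h3, h4⟩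
    refine ⟨fun j hj => if_neg hj, fun j hj => by
        show (if j ∈ Finset.range k then e j else 0) ∈ Q j
        rw [if_pos hj]
        exact h2 j (by simp only [Finset.mem_range] at hj ⊢; omega), ?_, ?_⟩
    · intro j1 j2 h12 hj2
      show (if j1 ∈ Finset.range k then e j1 else 0) < (if j2 ∈ Finset.range k then e j2 else 0)
      rw [if_pos (Finset.mem_range.mpr (by omega)), if_pos (Finset.mem_range.mpr hj2)]
      exact h3 j1 j2 h12 (by omega)
    · have he : (Finset.range k).image (stp k e) = (Finset.range k).image e := by
        apply Finset.image_congr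
        intro j hj
        simp only [Finset.coe_range, Set.mem_Iio] at hj
        show (if j ∈ Finset.range k then e j else 0) = e j
        rw [if_pos (Finset.mem_range.mpr hj)]
      show (Finset.range k).image (stp k e) ∈ gg 0
      rw [he]
      exact (hgood 0).1 (Finset.image_subset_image (by
        intro j hj; simp only [Finset.mem_range] at hj ⊢; omega)) h4
  obtain ⟨f, hfmem, hfstep⟩ := koenig Lk hfinL hneL stp hstp
  have hcompat : ∀ k j, j < k → f k j = f (k+1) j := by
    intro k j hj
    have h := congrFun (hfstep k) j
    rw [← h]
    show (if j ∈ Finset.range k then f (k+1) j else 0) = f (k+1) j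
    rw [if_pos (Finset.mem_range.mpr hj)]
  let c : ℕ → ℕ := fun j => f (j+1) j
  have stab : ∀ j m, j < m → f m j = c j := by
    intro j m hjm
    induction m with
    | zero => omega
    | succ m ihm =>
      rcases Nat.lt_succ_iff_lt_or_eq.mp hjm with h | h
      · rw [← hcompat m j h]
        exact ihm h
      · subst h; rfl
  have hmono : StrictMono c := by
    intro j1 j2 h
    have h1 : f (j2+1) j1 = c j1 := stab j1 (j2+1) (by omega)
    have h2 : f (j2+1) j2 = c j2 := stab j2 (j2+1) (by omega)
    have h3 := (hfmem (j2+1)).2.2.1 j1 j2 h (by omega)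
    rw [h1, h2] at h3
    exact h3
  have hbr : ∀ k, (Finset.range k).image c ∈ gg 0 := by
    intro k
    have he : (Finset.range k).image (f k) = (Finset.range k).image c := by
      apply Finset.image_congr
      intro j hj
      simp only [Finset.coe_range, Set.mem_Iio] at hj
      exact stab j k hj
    rw [← he]
    exact (hfmem k).2.2.2
  exact (hgood 0).2 ⟨c, hmono, hbr⟩


theorem ptak (G : Set (Finset ℕ)) : pGood G → ∀ ε : ℝ, 0 < ε → ∀ N : ℕ,
    ∃ (P : Finset ℕ) (w : ℕ → ℝ), (∀ i ∈ P, 0 ≤ w i) ∧ (∑ i ∈ P, w i = 1) ∧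
      (∀ i ∈ P, N < i) ∧ ∀ S ∈ G, ∑ i ∈ S ∩ P, w i ≤ ε := by
  refine prel_wf.induction (C := fun G => pGood G → ∀ ε : ℝ, 0 < ε → ∀ N : ℕ,
    ∃ (P : Finset ℕ) (w : ℕ → ℝ), (∀ i ∈ P, 0 ≤ w i) ∧ (∑ i ∈ P, w i = 1) ∧
      (∀ i ∈ P, N < i) ∧ ∀ S ∈ G, ∑ i ∈ S ∩ P, w i ≤ ε) G ?_
  clear G
  intro G IH hGood ε hε N
  classical
  -- partial sums of l unit measures
  have partial_meas : ∀ l : ℕ, ∃ (P : Finset ℕ) (W : ℕ → ℝ), (∀ i ∈ P, 0 ≤ W i) ∧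
      (∑ i ∈ P, W i = l) ∧ (∀ i ∈ P, N < i) ∧
      ∀ S ∈ G, ∑ i ∈ S ∩ P, W i ≤ 1 + l * (ε/2) := by
    intro l
    induction l with
    | zero =>
      refine ⟨∅, fun _ => 0, by simp, by simp, by simp, ?_⟩
      intro S hS
      simp
    | succ l ihl =>
      obtain ⟨P, W, hW0, hWs, hWN, hWc⟩ := ihl
      set Nb : ℕ := N + P.sup id with hNbdef
      have hPb : ∀ i ∈ P, i ≤ Nb := fun i hi =>
        le_trans (Finset.le_sup (f := id) hi) (by omega)
      set R := P.filter (fun p => ({p} : Finset ℕ) ∈ G) with hRdef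
      have hν : ∃ (Pν : Finset ℕ) (ν : ℕ → ℝ), (∀ i ∈ Pν, 0 ≤ ν i) ∧
          (∑ i ∈ Pν, ν i = 1) ∧ (∀ i ∈ Pν, Nb < i) ∧
          ∀ p ∈ R, ∀ S' ∈ pchild p G, ∑ i ∈ S' ∩ Pν, ν i ≤ ε/2 := by
        by_cases hRne : R.Nonempty
        · set H : Set (Finset ℕ) := {S | ∃ q ∈ R, S ∈ pchild q G} with hHdef
          have hrel : prel H G :=
            ⟨hGood, R, hRne, fun q hq => (Finset.mem_filter.mp hq).2, rfl⟩
          have hHgood : pGood H := by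
            constructor
            · rintro E S hES ⟨q, hq, hS1, hS2⟩
              exact ⟨q, hq, hGood.1 (Finset.insert_subset_insert q hES) hS1,
                fun i hi => hS2 i (hES hi)⟩
            · rintro ⟨c, hc, hck⟩
              refine hGood.2 ⟨c, hc, fun k => ?_⟩
              obtain ⟨q, hq, h1, -⟩ := hck k
              exact hGood.1 (Finset.subset_insert q _) h1
          obtain ⟨Pν, ν, h1, h2, h3, h4⟩ := IH H hrel hHgood (ε/2) (by linarith) Nb
          exact ⟨Pν, ν, h1, h2, h3, fun p hp S' hS' => h4 S' ⟨p, hp, hS'⟩⟩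
        · refine ⟨{Nb+1}, fun _ => 1, by simp, by simp, by simp, ?_⟩
          intro p hp
          exact absurd ⟨p, hp⟩ hRne
      obtain ⟨Pν, ν, hν0, hνs, hνN, hνc⟩ := hν
      have hdis : ∀ i ∈ Pν, i ∉ P := fun i hi hiP => by
        have h1 := hPb i hiP
        have h2 := hνN i hi
        omega
      have hdis' : Disjoint P Pν := Finset.disjoint_left.mpr fun {i} hiP hiν => hdis i hiν hiP
      refine ⟨P ∪ Pν, fun i => if i ∈ P then W i else ν i, ?_, ?_, ?_, ?_⟩
      · intro i hi
        show 0 ≤ if i ∈ P then W i else ν i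
        rcases Finset.mem_union.mp hi with h | h
        · rw [if_pos h]; exact hW0 i h
        · rw [if_neg (hdis i h)]; exact hν0 i h
      · rw [Finset.sum_union hdis']
        rw [Finset.sum_congr rfl (fun i hi => if_pos hi),
          Finset.sum_congr rfl (fun i (hi : i ∈ Pν) => if_neg (hdis i hi))]
        rw [hWs, hνs]
        push_cast
        ring
      · intro i hi
        rcases Finset.mem_union.mp hi with h | h
        · exact hWN i h
        · have := hνN i h; omega
      · intro S hS
        rw [Finset.inter_union_distrib_left]
        rw [Finset.sum_union (hdis'.mono Finset.inter_subset_right Finset.inter_subset_right)]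
        have e1 : ∑ i ∈ S ∩ P, (if i ∈ P then W i else ν i) = ∑ i ∈ S ∩ P, W i :=
          Finset.sum_congr rfl fun i hi => if_pos (Finset.mem_inter.mp hi).2
        have e2 : ∑ i ∈ S ∩ Pν, (if i ∈ P then W i else ν i) = ∑ i ∈ S ∩ Pν, ν i :=
          Finset.sum_congr rfl fun i hi => if_neg (hdis i (Finset.mem_inter.mp hi).2)
        rw [e1, e2]
        by_cases hSP : (S ∩ P).Nonempty
        · have hpS : (S ∩ P).min' hSP ∈ S := (Finset.mem_inter.mp ((S ∩ P).min'_mem hSP)).1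
          have hpP : (S ∩ P).min' hSP ∈ P := (Finset.mem_inter.mp ((S ∩ P).min'_mem hSP)).2
          set p := (S ∩ P).min' hSP
          have hpG : ({p} : Finset ℕ) ∈ G :=
            hGood.1 (Finset.singleton_subset_iff.mpr hpS) hS
          have hpR : p ∈ R := Finset.mem_filter.mpr ⟨hpP, hpG⟩
          have hSν : (S ∩ Pν) ∈ pchild p G := by
            constructor
            · refine hGood.1 ?_ hS
              intro i hi
              rcases Finset.mem_insert.mp hi with h | h
              · subst h; exact hpS
              · exact (Finset.mem_inter.mp h).1
            · intro i hi
              have h1 := hνN i (Finset.mem_inter.mp hi).2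
              have h2 := hPb p hpP
              omega
          have hcap := hνc p hpR (S ∩ Pν) hSν
          rw [Finset.inter_assoc, Finset.inter_self] at hcap
          have hc1 := hWc S hS
          push_cast
          linarith
        · rw [Finset.not_nonempty_iff_eq_empty.mp hSP]
          simp only [Finset.sum_empty, zero_add]
          have hle : ∑ i ∈ S ∩ Pν, ν i ≤ ∑ i ∈ Pν, ν i :=
            Finset.sum_le_sum_of_subset_of_nonneg Finset.inter_subset_right
              (fun i hi _ => hν0 i hi)
          rw [hνs] at hle
          have : (0:ℝ) ≤ (l+1) * (ε/2) := by positivity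
          push_cast
          linarith
  obtain ⟨d, hd1, hd2⟩ : ∃ d : ℕ, 1 ≤ d ∧ 2/ε ≤ (d:ℝ) :=
    ⟨max 1 ⌈2/ε⌉₊, le_max_left _ _,
      le_trans (Nat.le_ceil _) (by exact_mod_cast Nat.cast_le.mpr (le_max_right _ _))⟩
  obtain ⟨P, W, h0, hs, hN, hc⟩ := partial_meas d
  have hd0 : (0:ℝ) < d := by
    have : (1:ℝ) ≤ d := by exact_mod_cast hd1
    linarith
  refine ⟨P, fun i => W i / d, fun i hi => div_nonneg (h0 i hi) (le_of_lt hd0), ?_, hN, ?_⟩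
  · rw [← Finset.sum_div, hs]
    field_simp
  · intro S hS
    rw [← Finset.sum_div]
    have h1 := hc S hS
    have h2 : 2 ≤ (d:ℝ) * ε := by
      rw [div_le_iff₀ hε] at hd2
      linarith
    rw [div_le_iff₀ hd0]
    nlinarith

def gfam (F : Set (Finset ℕ)) (K : ℝ) (x : ℕ → ℕ → ℝ) : Set (Finset ℕ) :=
  {J | ∃ p : ℕ → Finset ℕ, (∀ n ∈ J, ∀ i ∈ p n, x n i ≠ 0) ∧
    (∀ n ∈ J, 1 / (2*K) < ∑ i ∈ p n, |x n i|) ∧ J.biUnion p ∈ F}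

lemma gfam_capture {F : Set (Finset ℕ)} {K : ℝ} {x : ℕ → ℕ → ℝ} (hF : FHC F) (hK : 1 ≤ K)
    (hdisj : ∀ n m, n ≠ m → Disjoint (Function.support (x n)) (Function.support (x m)))
    (hnorm : ∀ n, combNorm F (x n) = 1)
    (hlow : ∀ a : ℕ → ℝ, (Function.support a).Finite →
      ENNReal.ofReal ((∑ᶠ n, |a n|) / K) ≤ combNorm F (fun i => ∑ᶠ n, a n * x n i))
    (P : Finset ℕ) (w : ℕ → ℝ) (hw0 : ∀ i ∈ P, 0 ≤ w i) (hw1 : ∑ i ∈ P, w i = 1) :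
    ∃ J, J ∈ gfam F K x ∧ J ⊆ P ∧ 1/(4*K) < ∑ n ∈ J, w n := by
  classical
  have hK0 : (0:ℝ) < K := by linarith
  set a : ℕ → ℝ := fun n => if n ∈ P then w n else 0 with hadef
  have ha0 : ∀ n, 0 ≤ a n := by
    intro n
    show (0:ℝ) ≤ if n ∈ P then w n else 0
    split_ifs with h
    · exact hw0 n h
    · exact le_rfl
  have hsupp : Function.support a ⊆ ↑P := by
    intro n hn
    by_contra h
    exact hn (if_neg h)
  have hafin : (Function.support a).Finite := Set.Finite.subset P.finite_toSet hsupp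
  have hsum : ∑ᶠ n, |a n| = 1 := by
    rw [finsum_eq_finset_sum_of_support_subset (fun n => |a n|)
      (fun n hn => hsupp (fun h => hn (by simp only [Function.mem_support] at h ⊢; simp [h])))]
    rw [Finset.sum_congr rfl (fun n hn => by
      show |a n| = w n
      rw [abs_of_nonneg (ha0 n)]
      exact if_pos hn)]
    exact hw1
  have hcomb := hlow a hafin
  rw [hsum] at hcomb
  have hfun : (fun i => ∑ᶠ n, a n * x n i) = fun i => ∑ n ∈ P, a n * x n i := by
    funext i
    exact finsum_eq_finset_sum_of_support_subset _
      (fun n hn => hsupp (fun h => hn (by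
        simp only [Function.mem_support] at h ⊢
        rw [h, zero_mul])))
  rw [hfun] at hcomb
  have hlt : (3:ℝ)/(4*K) < 1/K := by
    rw [div_lt_div_iff₀ (by positivity) hK0]
    nlinarith
  have h34 : ENNReal.ofReal (3/(4*K)) < combNorm F (fun i => ∑ n ∈ P, a n * x n i) :=
    lt_of_lt_of_le ((ENNReal.ofReal_lt_ofReal_iff_of_nonneg (by positivity)).mpr hlt) hcomb
  rw [combNorm] at h34
  obtain ⟨S, hS34⟩ := lt_iSup_iff.mp h34
  obtain ⟨hSF, hS34⟩ := lt_iSup_iff.mp hS34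
  have hreal : 3/(4*K) < ∑ i ∈ S, |∑ n ∈ P, a n * x n i| := by
    by_contra h
    push_neg at h
    exact absurd hS34 (not_lt.mpr (ENNReal.ofReal_le_ofReal h))
  have hpt : ∀ i, |∑ n ∈ P, a n * x n i| = ∑ n ∈ P, a n * |x n i| := by
    intro i
    by_cases hex : ∃ n₀ ∈ P, x n₀ i ≠ 0
    · obtain ⟨n₀, hn₀P, hn₀⟩ := hex
      have hz : ∀ n, n ≠ n₀ → x n i = 0 := by
        intro n hne
        by_contra hx
        exact (Set.disjoint_left.mp (hdisj n n₀ hne)) hx hn₀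
      have e1 : ∑ n ∈ P, a n * x n i = a n₀ * x n₀ i :=
        Finset.sum_eq_single_of_mem n₀ hn₀P (fun n _ hne => by rw [hz n hne, mul_zero])
      have e2 : ∑ n ∈ P, a n * |x n i| = a n₀ * |x n₀ i| :=
        Finset.sum_eq_single_of_mem n₀ hn₀P (fun n _ hne => by rw [hz n hne]; simp)
      rw [e1, e2, abs_mul, abs_of_nonneg (ha0 n₀)]
    · push_neg at hex
      have e1 : ∑ n ∈ P, a n * x n i = 0 :=
        Finset.sum_eq_zero (fun n hn => by rw [hex n hn, mul_zero])
      have e2 : ∑ n ∈ P, a n * |x n i| = 0 :=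
        Finset.sum_eq_zero (fun n hn => by rw [hex n hn]; simp)
      rw [e1, e2, abs_zero]
  have hswap : ∑ i ∈ S, |∑ n ∈ P, a n * x n i| = ∑ n ∈ P, a n * (∑ i ∈ S, |x n i|) := by
    rw [Finset.sum_congr rfl (fun i _ => hpt i), Finset.sum_comm]
    exact Finset.sum_congr rfl fun n _ => (Finset.mul_sum _ _ _).symm
  rw [hswap] at hreal
  have hwle : ∀ n, ∑ i ∈ S, |x n i| ≤ 1 := by
    intro n
    have h1 : ENNReal.ofReal (∑ i ∈ S, |x n i|) ≤ combNorm F (x n) := by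
      rw [combNorm]
      exact le_iSup₂ (f := fun S (_ : S ∈ F) => ENNReal.ofReal (∑ i ∈ S, |x n i|)) S hSF
    rw [hnorm n] at h1
    exact ENNReal.ofReal_le_one.mp h1
  set J := P.filter (fun n => 1/(2*K) < ∑ i ∈ S, |x n i|) with hJdef
  have hJP : J ⊆ P := Finset.filter_subset _ _
  have hsplit := Finset.sum_filter_add_sum_filter_not P
    (fun n => 1/(2*K) < ∑ i ∈ S, |x n i|) (fun n => a n * (∑ i ∈ S, |x n i|))
  have hb1 : ∑ n ∈ J, a n * (∑ i ∈ S, |x n i|) ≤ ∑ n ∈ J, a n := by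
    apply Finset.sum_le_sum
    intro n hn
    calc a n * (∑ i ∈ S, |x n i|) ≤ a n * 1 := by
          apply mul_le_mul_of_nonneg_left (hwle n) (ha0 n)
      _ = a n := mul_one _
  have hb2 : ∑ n ∈ P.filter (fun n => ¬ (1/(2*K) < ∑ i ∈ S, |x n i|)),
      a n * (∑ i ∈ S, |x n i|) ≤ 1/(2*K) := by
    calc ∑ n ∈ P.filter (fun n => ¬ (1/(2*K) < ∑ i ∈ S, |x n i|)),
          a n * (∑ i ∈ S, |x n i|)
        ≤ ∑ n ∈ P.filter (fun n => ¬ (1/(2*K) < ∑ i ∈ S, |x n i|)), a n * (1/(2*K)) := by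
          apply Finset.sum_le_sum
          intro n hn
          have hnn : ∑ i ∈ S, |x n i| ≤ 1/(2*K) :=
            not_lt.mp (Finset.mem_filter.mp hn).2
          exact mul_le_mul_of_nonneg_left hnn (ha0 n)
      _ = (∑ n ∈ P.filter (fun n => ¬ (1/(2*K) < ∑ i ∈ S, |x n i|)), a n) * (1/(2*K)) :=
          (Finset.sum_mul _ _ _).symm
      _ ≤ 1 * (1/(2*K)) := by
          apply mul_le_mul_of_nonneg_right _ (by positivity)
          have hPa : ∑ n ∈ P, a n = 1 :=
            (Finset.sum_congr rfl (fun n hn => (if_pos hn : a n = w n))).trans hw1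
          calc ∑ n ∈ P.filter (fun n => ¬ (1/(2*K) < ∑ i ∈ S, |x n i|)), a n
              ≤ ∑ n ∈ P, a n := Finset.sum_le_sum_of_subset_of_nonneg
                (Finset.filter_subset _ _) (fun n _ _ => ha0 n)
            _ = 1 := hPa
      _ = 1/(2*K) := one_mul _
  have hJa : ∑ n ∈ J, a n = ∑ n ∈ J, w n :=
    Finset.sum_congr rfl (fun n hn => if_pos (hJP hn))
  have hJw : 1/(4*K) < ∑ n ∈ J, w n := by
    rw [← hJa]
    have heq : (3:ℝ)/(4*K) = 1/(4*K) + 1/(2*K) := by ring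
    rw [← hsplit] at hreal
    linarith
  refine ⟨J, ?_, hJP, hJw⟩
  refine ⟨fun n => S.filter (fun i => x n i ≠ 0), ?_, ?_, ?_⟩
  · intro n _ i hi
    exact (Finset.mem_filter.mp hi).2
  · intro n hn
    rw [Finset.sum_filter_of_ne (fun i _ h => abs_ne_zero.mp h)]
    exact (Finset.mem_filter.mp hn).2
  · refine hF.1 ?_ hSF
    exact Finset.biUnion_subset.mpr (fun n _ => Finset.filter_subset _ _)


end S12

theorem stmt_12 (F : Set (Finset ℕ)) (hF : FHC F) (K : ℝ) (hK : 1 ≤ K)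
    (x : ℕ → ℕ → ℝ)
    (hfin : ∀ n, (Function.support (x n)).Finite)
    (hdisj : ∀ n m, n ≠ m → Disjoint (Function.support (x n)) (Function.support (x m)))
    (hnorm : ∀ n, combNorm F (x n) = 1)
    (hlow : ∀ a : ℕ → ℝ, (Function.support a).Finite →
      ENNReal.ofReal ((∑ᶠ n, |a n|) / K) ≤ combNorm F (fun i => ∑ᶠ n, a n * x n i)) :
    ∃ A : Set ℕ, (∀ S : Finset ℕ, ↑S ⊆ A → S ∈ F) ∧
      {n | ENNReal.ofReal (1 / (2 * K)) < combNorm F (A.indicator (x n))}.Infinite := by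
  classical
  have hK0 : (0:ℝ) < K := by linarith
  -- Step 1: the family gfam has an infinite branch
  have hbr : S12.pBranch (S12.gfam F K x) := by
    by_contra hnb
    have hgood : S12.pGood (S12.gfam F K x) := by
      constructor
      · rintro E S hES ⟨p, h1, h2, h3⟩
        exact ⟨p, fun n hn => h1 n (hES hn), fun n hn => h2 n (hES hn),
          hF.1 (Finset.biUnion_subset_biUnion_of_subset_left p hES) h3⟩
      · exact hnb
    obtain ⟨P, w, h0, h1, -, hcap⟩ := S12.ptak (S12.gfam F K x) hgood (1/(8*K))
      (by positivity) 0
    obtain ⟨J, hJg, hJP, hJw⟩ := S12.gfam_capture hF hK hdisj hnorm hlow P w h0 h1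
    have h2 := hcap J hJg
    rw [Finset.inter_eq_left.mpr hJP] at h2
    have h3 : 1/(8*K) < 1/(4*K) := by
      rw [div_lt_div_iff₀ (by positivity) (by positivity)]
      nlinarith
    linarith
  obtain ⟨c, hcmono, hcmem⟩ := hbr
  set Jk : ℕ → Finset ℕ := fun k => (Finset.range k).image c with hJkdef
  have hJmono : ∀ k m, k ≤ m → Jk k ⊆ Jk m := fun k m h =>
    Finset.image_subset_image (by
      intro j hj
      simp only [Finset.mem_range] at hj ⊢
      omega)
  -- Step 2: König to merge piece assignments
  set L : ℕ → Set (ℕ → Finset ℕ) := fun k => {p | (∀ n, n ∉ Jk k → p n = ∅) ∧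
    (∀ n ∈ Jk k, (∀ i ∈ p n, x n i ≠ 0) ∧ 1/(2*K) < ∑ i ∈ p n, |x n i|) ∧
    (Jk k).biUnion p ∈ F} with hLdef
  have hLfin : ∀ k, (L k).Finite := by
    intro k
    apply (S12.finite_funs (Jk k) (fun n => (hfin n).toFinset.powerset) ∅).subset
    rintro p ⟨h1, h2, -⟩
    refine ⟨h1, fun n hn => Finset.mem_powerset.mpr (fun i hi => ?_)⟩
    rw [Set.Finite.mem_toFinset]
    exact (h2 n hn).1 i hi
  have hLne : ∀ k, (L k).Nonempty := by
    intro k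
    obtain ⟨p, h1, h2, h3⟩ := hcmem k
    refine ⟨fun n => if n ∈ Jk k then p n else ∅, fun n hn => if_neg hn, fun n hn => ?_, ?_⟩
    · show (∀ i ∈ (if n ∈ Jk k then p n else ∅), x n i ≠ 0) ∧
        1/(2*K) < ∑ i ∈ (if n ∈ Jk k then p n else ∅), |x n i|
      rw [if_pos hn]
      exact ⟨h1 n hn, h2 n hn⟩
    · show (Jk k).biUnion (fun n => if n ∈ Jk k then p n else ∅) ∈ F
      rw [Finset.biUnion_congr rfl (fun n hn => if_pos hn)]
      exact h3
  set stp : ℕ → (ℕ → Finset ℕ) → (ℕ → Finset ℕ) :=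
    fun k p n => if n ∈ Jk k then p n else ∅ with hstpdef
  have hstp : ∀ k p, p ∈ L (k+1) → stp k p ∈ L k := by
    rintro k p ⟨h1, h2, h3⟩
    have hsub : Jk k ⊆ Jk (k+1) := hJmono k (k+1) (by omega)
    refine ⟨fun n hn => if_neg hn, fun n hn => ?_, ?_⟩
    · show (∀ i ∈ (if n ∈ Jk k then p n else ∅), x n i ≠ 0) ∧
        1/(2*K) < ∑ i ∈ (if n ∈ Jk k then p n else ∅), |x n i|
      rw [if_pos hn]
      exact h2 n (hsub hn)
    · show (Jk k).biUnion (stp k p) ∈ F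
      have he : (Jk k).biUnion (stp k p) = (Jk k).biUnion p :=
        Finset.biUnion_congr rfl (fun n hn => if_pos hn)
      rw [he]
      exact hF.1 (Finset.biUnion_subset_biUnion_of_subset_left p hsub) h3
  obtain ⟨f, hfmem, hfstep⟩ := S12.koenig L hLfin hLne stp hstp
  have hcompat : ∀ k n, n ∈ Jk k → f k n = f (k+1) n := by
    intro k n hn
    have h := congrFun (hfstep k) n
    rw [← h]
    show (if n ∈ Jk k then f (k+1) n else ∅) = f (k+1) n
    rw [if_pos hn]
  have stab : ∀ k m, k ≤ m → ∀ n ∈ Jk k, f m n = f k n := by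
    intro k m hkm
    induction m with
    | zero =>
      intro n hn
      have : k = 0 := by omega
      subst this
      rfl
    | succ m ihm =>
      intro n hn
      rcases Nat.lt_succ_iff_lt_or_eq.mp (Nat.lt_succ_of_le hkm) with h | h
      · have hkm' : k ≤ m := by omega
        rw [← hcompat m n (hJmono k m hkm' hn)]
        exact ihm hkm' n hn
      · subst h
        rfl
  set U : ℕ → Finset ℕ := fun k => (Jk k).biUnion (f k) with hUdef
  have hUF : ∀ k, U k ∈ F := fun k => (hfmem k).2.2
  have hUmono : ∀ k m, k ≤ m → U k ⊆ U m := by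
    intro k m hkm i hi
    obtain ⟨n, hn, hin⟩ := Finset.mem_biUnion.mp hi
    refine Finset.mem_biUnion.mpr ⟨n, hJmono k m hkm hn, ?_⟩
    rw [stab k m hkm n hn]
    exact hin
  refine ⟨⋃ k, (U k : Set ℕ), ?_, ?_⟩
  · -- all finite subsets are in F
    have hex : ∀ S : Finset ℕ, ↑S ⊆ (⋃ k, (U k : Set ℕ)) → ∃ k, S ⊆ U k := by
      intro S
      induction S using Finset.induction_on with
      | empty => exact fun _ => ⟨0, Finset.empty_subset _⟩
      | @insert a S' ha ih =>
        intro h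
        obtain ⟨k1, hk1⟩ := Set.mem_iUnion.mp (h (Finset.mem_coe.mpr (Finset.mem_insert_self a S')))
        obtain ⟨k2, hk2⟩ := ih ((Finset.coe_subset.mpr (Finset.subset_insert a S')).trans h)
        refine ⟨max k1 k2, Finset.insert_subset ?_
          (hk2.trans (hUmono k2 _ (le_max_right _ _)))⟩
        exact hUmono k1 _ (le_max_left _ _) (Finset.mem_coe.mp hk1)
    intro S hS
    obtain ⟨k, hk⟩ := hex S hS
    exact hF.1 hk (hUF k)
  · -- infinitely many heavy coordinates
    apply Set.infinite_of_injective_forall_mem (f := c) hcmono.injective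
    intro j
    set n := c j with hndef
    have hnJ : n ∈ Jk (j+1) :=
      Finset.mem_image.mpr ⟨j, Finset.mem_range.mpr (by omega), rfl⟩
    set B := f (j+1) n with hBdef
    have hBU : B ⊆ U (j+1) := fun i hi => Finset.mem_biUnion.mpr ⟨n, hnJ, hi⟩
    have hBF : B ∈ F := hF.1 hBU (hUF (j+1))
    have hBA : ∀ i ∈ B, i ∈ (⋃ k, (U k : Set ℕ)) := fun i hi =>
      Set.mem_iUnion.mpr ⟨j+1, Finset.mem_coe.mpr (hBU hi)⟩
    have hBsum : 1/(2*K) < ∑ i ∈ B, |x n i| := ((hfmem (j+1)).2.1 n hnJ).2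
    have hind : ∑ i ∈ B, |Set.indicator (⋃ k, (U k : Set ℕ)) (x n) i| = ∑ i ∈ B, |x n i| :=
      Finset.sum_congr rfl fun i hi => by rw [Set.indicator_of_mem (hBA i hi)]
    show ENNReal.ofReal (1 / (2 * K)) <
      combNorm F ((⋃ k, (U k : Set ℕ)).indicator (x n))
    have hle : ENNReal.ofReal (∑ i ∈ B, |Set.indicator (⋃ k, (U k : Set ℕ)) (x n) i|)
        ≤ combNorm F ((⋃ k, (U k : Set ℕ)).indicator (x n)) := by
      rw [combNorm]
      exact le_iSup₂ (f := fun S (_ : S ∈ F) =>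
        ENNReal.ofReal (∑ i ∈ S, |Set.indicator (⋃ k, (U k : Set ℕ)) (x n) i|)) B hBF
    refine lt_of_lt_of_le ?_ hle
    rw [hind]
    exact (ENNReal.ofReal_lt_ofReal_iff_of_nonneg (by positivity)).mpr hBsum
end
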